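/- arXiv:2211.12218 — 2 statements merged into one kernel-verified Lean document; each statement's English description precedes it below -/
import Mathlib

section
/- Let p(·) ∈ 𝒫^{log}(ℝⁿ) with 0 < p₋ ≤ p₊ < ∞ and p_∞ = p₊, and let s > 1/p₋. If ω^{1/s} ∈ RH_{sp₊}, then with implied constants independent of the cube: ‖χ_Q‖_{L^{p(·)}_ω} ≈ (∫_Q ω(x)^{p₊} dx)^{1/p₊} when ℓ(Q) > 1, and ‖χ_Q‖_{L^{p(·)}_ω} ≈ (∫_Q ω(x)^{p₊(Q)} dx)^{1/p₊(Q)} when ℓ(Q) ≤ 1, where p₊(Q) = ess sup_{x∈Q} p(x). -/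
open MeasureTheory ENNReal Filter

noncomputable section

abbrev Rn (n : ℕ) := Fin n → ℝ

/-- The axis-parallel cube centered at `z` with side length `r`. -/
def Cube (n : ℕ) (z : Rn n) (r : ℝ) : Set (Rn n) := {x | ∀ i, |x i - z i| ≤ r / 2}

/-- Characteristic function of the cube `Q(z,r)`. -/
def cubeInd (n : ℕ) (z : Rn n) (r : ℝ) : Rn n → ℝ :=
  (Cube n z r).indicator (fun _ => (1 : ℝ))

/-- Pointwise conjugate exponent. -/
def conjE (t : ℝ) : ℝ := t / (t - 1)

/-- Luxemburg quasi-norm with variable exponent `p`, for `ℝ≥0∞`-valued functions. -/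
def eNorm (n : ℕ) (p : Rn n → ℝ) (f : Rn n → ℝ≥0∞) : ℝ≥0∞ :=
  sInf {lam : ℝ≥0∞ | 0 < lam ∧ ∫⁻ x, (f x / lam) ^ (p x) ≤ 1}

/-- Weighted variable Lebesgue norm for `ℝ≥0∞`-valued functions. -/
def wNormE (n : ℕ) (p ω : Rn n → ℝ) (f : Rn n → ℝ≥0∞) : ℝ≥0∞ :=
  eNorm n p (fun x => f x * ENNReal.ofReal (ω x))

/-- Weighted variable Lebesgue norm `‖f‖_{L^{p(·)}_ω}`. -/
def wNorm (n : ℕ) (p ω : Rn n → ℝ) (f : Rn n → ℝ) : ℝ≥0∞ :=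
  wNormE n p ω (fun x => ENNReal.ofReal |f x|)

/-- A weight: locally integrable, positive a.e. -/
def IsWeight (n : ℕ) (ω : Rn n → ℝ) : Prop :=
  Measurable ω ∧ LocallyIntegrable ω (volume : Measure (Rn n)) ∧
    ∀ᵐ x ∂(volume : Measure (Rn n)), 0 < ω x

/-- essential infimum p₋ -/
def pMinus (n : ℕ) (p : Rn n → ℝ) : ℝ := essInf p (volume : Measure (Rn n))

/-- essential supremum p₊ -/
def pPlus (n : ℕ) (p : Rn n → ℝ) : ℝ := essSup p (volume : Measure (Rn n))

def pMinusOn (n : ℕ) (p : Rn n → ℝ) (E : Set (Rn n)) : ℝ :=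
  essInf p ((volume : Measure (Rn n)).restrict E)

def pPlusOn (n : ℕ) (p : Rn n → ℝ) (E : Set (Rn n)) : ℝ :=
  essSup p ((volume : Measure (Rn n)).restrict E)

/-- An exponent function `p(·) : ℝⁿ → (0,∞)` with `0 < p₋ ≤ p₊ < ∞`. -/
def IsExponent (n : ℕ) (p : Rn n → ℝ) : Prop :=
  Measurable p ∧ (∀ x, 0 < p x) ∧ 0 < pMinus n p ∧
    IsBoundedUnder (· ≤ ·) (ae (volume : Measure (Rn n))) p

/-- Hardy--Littlewood maximal operator (over cubes) for `ℝ≥0∞`-valued functions. -/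
def eMax (n : ℕ) (f : Rn n → ℝ≥0∞) (x : Rn n) : ℝ≥0∞ :=
  ⨆ (z : Rn n) (r : ℝ) (_ : 0 < r) (_ : x ∈ Cube n z r),
    (volume (Cube n z r))⁻¹ * ∫⁻ y in Cube n z r, f y

/-- Hardy--Littlewood maximal operator of a real function. -/
def maxOp (n : ℕ) (f : Rn n → ℝ) : Rn n → ℝ≥0∞ :=
  eMax n (fun y => ENNReal.ofReal |f y|)

/-- Fractional maximal operator `M_β`. -/
def fracMax (n : ℕ) (β : ℝ) (f : Rn n → ℝ) (x : Rn n) : ℝ≥0∞ :=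
  ⨆ (z : Rn n) (r : ℝ) (_ : 0 < r) (_ : x ∈ Cube n z r),
    (volume (Cube n z r)) ^ (β / n - 1) * ∫⁻ y in Cube n z r, ENNReal.ofReal |f y|

/-- `M` is bounded on `L^{p(·)}_ω`. -/
def MaximalBdd (n : ℕ) (p ω : Rn n → ℝ) : Prop :=
  ∃ C : ℝ≥0∞, C ≠ ⊤ ∧ ∀ f : Rn n → ℝ, Measurable f →
    wNormE n p ω (maxOp n f) ≤ C * wNorm n p ω f

/-- The class of weights 𝒲_{p(·)}. -/
def Wclass (n : ℕ) (p ω : Rn n → ℝ) : Prop :=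
  (∃ ps : ℝ, 0 < ps ∧ ps < min 1 (pMinus n p) ∧
    ∀ (z : Rn n) (r : ℝ), 0 < r →
      wNorm n (fun x => p x / ps) (fun x => ω x ^ ps) (cubeInd n z r) ≠ ⊤ ∧
      wNorm n (fun x => conjE (p x / ps)) (fun x => ω x ^ (-ps)) (cubeInd n z r) ≠ ⊤) ∧
  (∃ κ : ℝ, 1 < κ ∧ ∃ s : ℝ, 1 < s ∧
    MaximalBdd n (fun x => conjE (s * p x) / κ) (fun x => ω x ^ (-(κ / s))))

/-- The index `s_{ω,p(·)}`. -/
def sIndex (n : ℕ) (p ω : Rn n → ℝ) : ℝ :=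
  sInf {s : ℝ | 1 ≤ s ∧ MaximalBdd n (fun x => conjE (s * p x)) (fun x => ω x ^ (-(1/s)))}

/-- The class `𝒫^{log}` with distinguished value `p_∞`. -/
def PLog (n : ℕ) (p : Rn n → ℝ) (pinf : ℝ) : Prop :=
  (∃ C : ℝ, 0 < C ∧ ∀ x y : Rn n, dist x y ≤ 1/2 →
    |p x - p y| ≤ C / (-Real.log (dist x y))) ∧
  (∃ C : ℝ, 0 < C ∧ ∀ x : Rn n, |p x - pinf| ≤ C / Real.log (Real.exp 1 + ‖x‖)) ∧
  pMinus n p ≤ pinf ∧ pinf ≤ pPlus n p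

/-- Reverse Hölder class `RH_s`. -/
def RH (n : ℕ) (s : ℝ) (ω : Rn n → ℝ) : Prop :=
  ∃ C : ℝ, 0 < C ∧ ∀ (z : Rn n) (r : ℝ), 0 < r →
    ((volume (Cube n z r))⁻¹ * ∫⁻ x in Cube n z r, ENNReal.ofReal (ω x ^ s)) ^ (1/s)
      ≤ ENNReal.ofReal C *
        ((volume (Cube n z r))⁻¹ * ∫⁻ x in Cube n z r, ENNReal.ofReal (ω x))

/-- Riesz potential `I_α`. -/
def riesz (n : ℕ) (α : ℝ) (f : Rn n → ℝ) (x : Rn n) : ℝ :=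
  ∫ y, f y * ‖x - y‖ ^ (α - (n : ℝ))

/-- `(∫_E ω^t)^{1/t}`. -/
def wInt (n : ℕ) (ω : Rn n → ℝ) (t : ℝ) (E : Set (Rn n)) : ℝ≥0∞ :=
  (∫⁻ x in E, ENNReal.ofReal (ω x ^ t)) ^ (1/t)


namespace S9
open Set

variable {n : ℕ}

lemma cube_eq_Icc (z : Rn n) (r : ℝ) :
    Cube n z r = Set.Icc (fun i => z i - r/2) (fun i => z i + r/2) := by
  ext x
  simp only [Cube, Set.mem_setOf_eq, Set.mem_Icc, Pi.le_def]
  constructor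
  · intro h
    constructor <;> intro i <;> rcases abs_le.1 (h i) with ⟨h1, h2⟩ <;> linarith
  · rintro ⟨h1, h2⟩ i
    rw [abs_le]
    exact ⟨by linarith [h1 i], by linarith [h2 i]⟩

lemma measurableSet_cube (z : Rn n) (r : ℝ) : MeasurableSet (Cube n z r) := by
  rw [cube_eq_Icc]; exact measurableSet_Icc

lemma volume_cube (z : Rn n) (r : ℝ) :
    volume (Cube n z r) = ENNReal.ofReal r ^ (n : ℕ) := by
  rw [cube_eq_Icc, Real.volume_Icc_pi]
  have : ∀ i : Fin n, (z i + r/2) - (z i - r/2) = r := fun i => by ring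
  simp only [this, Finset.prod_const, Finset.card_univ, Fintype.card_fin]

lemma volume_cube_pos (z : Rn n) {r : ℝ} (hr : 0 < r) : 0 < volume (Cube n z r) := by
  rw [volume_cube]
  exact ENNReal.pow_pos (ENNReal.ofReal_pos.2 hr) n

lemma volume_cube_lt_top (z : Rn n) (r : ℝ) : volume (Cube n z r) < ⊤ := by
  rw [volume_cube]
  exact ENNReal.pow_lt_top ENNReal.ofReal_lt_top

lemma dist_le_of_mem_cube {z : Rn n} {r : ℝ} (hr : 0 ≤ r) {x y : Rn n}
    (hx : x ∈ Cube n z r) (hy : y ∈ Cube n z r) : dist x y ≤ r := by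
  rw [dist_pi_le_iff hr]
  intro i
  rw [Real.dist_eq]
  calc |x i - y i| ≤ |x i - z i| + |z i - y i| := abs_sub_le _ _ _
    _ ≤ r/2 + r/2 := add_le_add (hx i) (by rw [abs_sub_comm]; exact hy i)
    _ = r := by ring

lemma wNorm_cubeInd (p ω : Rn n → ℝ) (hp : ∀ x, 0 < p x) (z : Rn n) (r : ℝ) :
    wNorm n p ω (cubeInd n z r) =
      sInf {lam : ℝ≥0∞ | 0 < lam ∧ ∫⁻ x in Cube n z r, (ENNReal.ofReal (ω x) / lam) ^ p x ≤ 1} := by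
  unfold wNorm wNormE eNorm
  congr 1
  ext lam
  simp only [Set.mem_setOf_eq, and_congr_right_iff]
  intro hlam
  have h : (fun x => (ENNReal.ofReal |cubeInd n z r x| * ENNReal.ofReal (ω x) / lam) ^ p x)
      = (Cube n z r).indicator (fun x => (ENNReal.ofReal (ω x) / lam) ^ p x) := by
    funext x
    by_cases hx : x ∈ Cube n z r
    · simp [cubeInd, Set.indicator_of_mem hx]
    · simp [cubeInd, Set.indicator_of_notMem hx, ENNReal.zero_rpow_of_pos (hp x)]
  rw [h, lintegral_indicator (measurableSet_cube z r)]

end S9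
namespace S9

lemma rpow_le_add (t : ℝ≥0∞) {a b c : ℝ} (hab : a ≤ b) (hbc : b ≤ c) :
    t ^ b ≤ t ^ a + t ^ c := by
  rcases le_total t 1 with h | h
  · exact le_trans (ENNReal.rpow_le_rpow_of_exponent_ge h hab) le_self_add
  · exact le_trans (ENNReal.rpow_le_rpow_of_exponent_le h hbc) le_add_self

lemma rpow_split (t : ℝ≥0∞) {T : ℝ≥0∞} (hT0 : T ≠ 0) (hTt : T ≠ ⊤) {a b : ℝ}
    (ha : 0 < a) (hab : a ≤ b) :
    t ^ a ≤ T ^ a + t ^ b * T ^ (a - b) := by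
  rcases le_or_gt t T with h | h
  · exact le_trans (ENNReal.rpow_le_rpow h ha.le) le_self_add
  · rcases eq_or_ne t ⊤ with rfl | htop
    · rw [ENNReal.top_rpow_of_pos ha, ENNReal.top_rpow_of_pos (ha.trans_le hab),
        ENNReal.top_mul (by simp [ENNReal.rpow_eq_zero_iff, hT0, hTt] : T ^ (a - b) ≠ 0)]
      exact le_add_self
    · have ht0 : t ≠ 0 := fun h0 => by
        rw [h0] at h; exact (not_lt_of_ge (zero_le : (0:ℝ≥0∞) ≤ T)) h
      have h1 : t ^ a = t ^ b * t ^ (a - b) := by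
        rw [← ENNReal.rpow_add _ _ ht0 htop]; ring_nf
      have h2 : t ^ (a - b) ≤ T ^ (a - b) := by
        rw [show a - b = -(b - a) by ring, ENNReal.rpow_neg, ENNReal.rpow_neg]
        exact ENNReal.inv_le_inv.2 (ENNReal.rpow_le_rpow h.le (by linarith))
      rw [h1]
      exact le_trans (mul_le_mul_right h2 _) le_add_self

lemma lintegral_rpow_le {α : Type*} [MeasurableSpace α] (μ : MeasureTheory.Measure α)
    (u : α → ℝ≥0∞) (hu : AEMeasurable u μ) {a b : ℝ} (ha : 0 < a) (hab : a < b) :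
    ∫⁻ x, u x ^ a ∂μ ≤ (∫⁻ x, u x ^ b ∂μ) ^ (a/b) * (μ Set.univ) ^ (1 - a/b) := by
  have hb : 0 < b := ha.trans hab
  have hpq : (b/a).HolderConjugate (1 - a/b)⁻¹ := by
    refine Real.holderConjugate_iff.mpr ⟨?_, ?_⟩
    · exact (one_lt_div ha).2 hab
    · rw [inv_inv, inv_div]
      ring
  have H := ENNReal.lintegral_mul_le_Lp_mul_Lq μ hpq (hu.pow_const a) aemeasurable_const
    (g := fun _ => (1 : ℝ≥0∞))
  simp only [Pi.mul_apply, mul_one, ENNReal.one_rpow, MeasureTheory.lintegral_one,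
    MeasureTheory.lintegral_const] at H
  calc ∫⁻ x, u x ^ a ∂μ ≤ (∫⁻ x, (u x ^ a) ^ (b/a) ∂μ) ^ (1/(b/a)) * (μ Set.univ) ^ (1/(1 - a/b)⁻¹) := H
    _ = (∫⁻ x, u x ^ b ∂μ) ^ (a/b) * (μ Set.univ) ^ (1 - a/b) := by
        congr 1
        · congr 1
          · congr 1
            funext x
            rw [← ENNReal.rpow_mul]
            congr 1
            field_simp
          · rw [one_div, inv_div]
        · rw [one_div, inv_inv]

end S9
namespace S9
open MeasureTheory

lemma rhs_unfold (A lam V : ℝ≥0∞) {s qs : ℝ} (hs : 0 < s) (hqs : 0 < qs) :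
    (A * (lam ^ (1/s) * V ^ (-(1/(s*qs))))) ^ (s*qs) = A ^ (s*qs) * lam ^ qs * V⁻¹ := by
  have hsqs : (0:ℝ) < s*qs := by positivity
  rw [ENNReal.mul_rpow_of_nonneg _ _ hsqs.le, ENNReal.mul_rpow_of_nonneg _ _ hsqs.le,
    ← ENNReal.rpow_mul lam, ← ENNReal.rpow_mul V,
    show 1/s * (s*qs) = qs by field_simp,
    show -(1/(s*qs)) * (s*qs) = -1 by rw [neg_mul, one_div, inv_mul_cancel₀ hsqs.ne'],
    ENNReal.rpow_neg_one, mul_assoc]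

lemma pow_unfold2 (D lam : ℝ≥0∞) {s qs : ℝ} (hs : 0 < s) (hqs : 0 < qs) :
    (D ^ (s*qs) * lam ^ qs) ^ (1/qs) = D ^ s * lam := by
  rw [ENNReal.mul_rpow_of_nonneg _ _ (by positivity : (0:ℝ) ≤ 1/qs),
    ← ENNReal.rpow_mul, ← ENNReal.rpow_mul,
    show s*qs*(1/qs) = s by field_simp,
    show qs*(1/qs) = 1 by field_simp,
    ENNReal.rpow_one]

lemma low_core {n : ℕ} (z : Rn n) {r : ℝ} (hr : 0 < r) (p ω : Rn n → ℝ)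
    {s qs : ℝ} (hs : 0 < s) (hqs : 0 < qs)
    {c₄ CR : ℝ} (hc₄ : 0 ≤ c₄) (hCR : 0 < CR)
    {lam : ℝ≥0∞} (hlam0 : lam ≠ 0) (hlamt : lam ≠ ⊤)
    (hps : ∀ᵐ x ∂(volume.restrict (Cube n z r)), 1/s ≤ p x)
    (hKEY : ∀ᵐ x ∂(volume.restrict (Cube n z r)),
      (volume (Cube n z r)) ^ ((p x - 1/s)/qs)
        ≤ ENNReal.ofReal c₄ * (volume (Cube n z r)) ^ (1 - 1/(s*qs)))
    (hmod : ∫⁻ x in Cube n z r, (ENNReal.ofReal (ω x) / lam) ^ p x ≤ 1)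
    (hRHQ : ((volume (Cube n z r))⁻¹ * ∫⁻ x in Cube n z r, (ENNReal.ofReal (ω x)) ^ qs) ^ (1/(s*qs))
      ≤ ENNReal.ofReal CR *
        ((volume (Cube n z r))⁻¹ * ∫⁻ x in Cube n z r, (ENNReal.ofReal (ω x)) ^ (1/s))) :
    (∫⁻ x in Cube n z r, (ENNReal.ofReal (ω x)) ^ qs) ^ (1/qs)
      ≤ ENNReal.ofReal ((CR * (1 + c₄)) ^ s) * lam := by
  set V : ℝ≥0∞ := volume (Cube n z r) with hV
  have hV0 : V ≠ 0 := (volume_cube_pos z hr).ne'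
  have hVt : V ≠ ⊤ := (volume_cube_lt_top z r).ne
  set w : Rn n → ℝ≥0∞ := fun x => ENNReal.ofReal (ω x) with hw
  set T : ℝ≥0∞ := V ^ (-(1/qs)) with hT
  have hT0 : T ≠ 0 := by
    simp only [hT, Ne, ENNReal.rpow_eq_zero_iff]
    push_neg
    exact ⟨fun h => absurd h hV0, fun h => absurd h hVt⟩
  have hTt : T ≠ ⊤ := by
    simp only [hT, Ne, ENNReal.rpow_eq_top_iff]
    push_neg
    exact ⟨fun h => absurd h hV0, fun h => absurd h hVt⟩
  have hVconst : ENNReal.ofReal c₄ * V ^ (1 - 1/(s*qs)) ≠ ⊤ := by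
    apply ENNReal.mul_ne_top ENNReal.ofReal_ne_top
    simp only [Ne, ENNReal.rpow_eq_top_iff]
    push_neg
    exact ⟨fun h => absurd h hV0, fun h => absurd h hVt⟩
  -- Step 1 : bound the (1/s)-integral of w/lam
  have step1 : ∫⁻ x in Cube n z r, (w x / lam) ^ (1/s)
      ≤ (1 + ENNReal.ofReal c₄) * V ^ (1 - 1/(s*qs)) := by
    have hsplit : ∀ᵐ x ∂(volume.restrict (Cube n z r)),
        (w x / lam) ^ (1/s)
          ≤ T ^ (1/s) + (w x / lam) ^ (p x) * (ENNReal.ofReal c₄ * V ^ (1 - 1/(s*qs))) := by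
      filter_upwards [hps, hKEY] with x h1 h2
      have base := rpow_split (w x / lam) hT0 hTt (by positivity : (0:ℝ) < 1/s) h1
      have hTrw : T ^ (1/s - p x) = V ^ ((p x - 1/s)/qs) := by
        rw [hT, ← ENNReal.rpow_mul]
        congr 1
        field_simp
        ring
      calc (w x / lam) ^ (1/s) ≤ T ^ (1/s) + (w x / lam) ^ (p x) * T ^ (1/s - p x) := base
        _ ≤ T ^ (1/s) + (w x / lam) ^ (p x) * (ENNReal.ofReal c₄ * V ^ (1 - 1/(s*qs))) := by
            rw [hTrw]
            exact add_le_add_right (mul_le_mul_right h2 _) _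
    calc ∫⁻ x in Cube n z r, (w x / lam) ^ (1/s)
        ≤ ∫⁻ x in Cube n z r,
            (T ^ (1/s) + (w x / lam) ^ (p x) * (ENNReal.ofReal c₄ * V ^ (1 - 1/(s*qs)))) :=
          lintegral_mono_ae hsplit
      _ = T ^ (1/s) * V + ∫⁻ x in Cube n z r,
            (w x / lam) ^ (p x) * (ENNReal.ofReal c₄ * V ^ (1 - 1/(s*qs))) := by
          rw [lintegral_add_left measurable_const, setLIntegral_const]
      _ = T ^ (1/s) * V +
            (∫⁻ x in Cube n z r, (w x / lam) ^ (p x)) * (ENNReal.ofReal c₄ * V ^ (1 - 1/(s*qs))) := by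
          rw [lintegral_mul_const' _ _ hVconst]
      _ ≤ T ^ (1/s) * V + 1 * (ENNReal.ofReal c₄ * V ^ (1 - 1/(s*qs))) := by
          exact add_le_add_right (mul_le_mul_left hmod _) _
      _ = (1 + ENNReal.ofReal c₄) * V ^ (1 - 1/(s*qs)) := by
          have hTV : T ^ (1/s) * V = V ^ (1 - 1/(s*qs)) := by
            rw [hT, ← ENNReal.rpow_mul]
            nth_rewrite 2 [← ENNReal.rpow_one V]
            rw [← ENNReal.rpow_add _ _ hV0 hVt]
            congr 1
            field_simp
            ring
          rw [hTV, one_mul, add_mul, one_mul]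
  -- Step 2 : transfer to w
  have step2 : V⁻¹ * ∫⁻ x in Cube n z r, w x ^ (1/s)
      ≤ lam ^ (1/s) * (1 + ENNReal.ofReal c₄) * V ^ (-(1/(s*qs))) := by
    have hweq : ∀ x, w x ^ (1/s) = (w x / lam) ^ (1/s) * lam ^ (1/s) := by
      intro x
      rw [← ENNReal.mul_rpow_of_nonneg _ _ (by positivity : (0:ℝ) ≤ 1/s),
        ENNReal.div_mul_cancel hlam0 hlamt]
    have : ∫⁻ x in Cube n z r, w x ^ (1/s)
        = (∫⁻ x in Cube n z r, (w x / lam) ^ (1/s)) * lam ^ (1/s) := by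
      simp_rw [hweq]
      rw [lintegral_mul_const' _ _ (by simp [ENNReal.rpow_eq_top_iff, hlam0, hlamt,
        (by positivity : (0:ℝ) < 1/s)] : lam ^ (1/s) ≠ ⊤)]
    rw [this]
    calc V⁻¹ * ((∫⁻ x in Cube n z r, (w x / lam) ^ (1/s)) * lam ^ (1/s))
        ≤ V⁻¹ * (((1 + ENNReal.ofReal c₄) * V ^ (1 - 1/(s*qs))) * lam ^ (1/s)) := by
          exact mul_le_mul_right (mul_le_mul_left step1 _) _
      _ = lam ^ (1/s) * (1 + ENNReal.ofReal c₄) * (V⁻¹ * V ^ (1 - 1/(s*qs))) := by ring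
      _ = lam ^ (1/s) * (1 + ENNReal.ofReal c₄) * V ^ (-(1/(s*qs))) := by
          congr 1
          rw [← ENNReal.rpow_neg_one V, ← ENNReal.rpow_add _ _ hV0 hVt]
          congr 1
          ring
  -- Step 3 : combine with reverse Hölder
  have step3 : (V⁻¹ * ∫⁻ x in Cube n z r, w x ^ qs) ^ (1/(s*qs))
      ≤ (ENNReal.ofReal CR * (1 + ENNReal.ofReal c₄)) * (lam ^ (1/s) * V ^ (-(1/(s*qs)))) := by
    calc (V⁻¹ * ∫⁻ x in Cube n z r, w x ^ qs) ^ (1/(s*qs))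
        ≤ ENNReal.ofReal CR * (V⁻¹ * ∫⁻ x in Cube n z r, w x ^ (1/s)) := hRHQ
      _ ≤ ENNReal.ofReal CR * (lam ^ (1/s) * (1 + ENNReal.ofReal c₄) * V ^ (-(1/(s*qs)))) :=
          mul_le_mul_right step2 _
      _ = (ENNReal.ofReal CR * (1 + ENNReal.ofReal c₄)) * (lam ^ (1/s) * V ^ (-(1/(s*qs)))) := by
          ring
  -- Step 4 : raise to the power s*qs and cancel V
  have hsqs : (0:ℝ) < s * qs := by positivity
  set D : ℝ≥0∞ := ENNReal.ofReal CR * (1 + ENNReal.ofReal c₄) with hD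
  have step4 : (∫⁻ x in Cube n z r, w x ^ qs) * V⁻¹ ≤ D ^ (s*qs) * lam ^ qs * V⁻¹ := by
    have h4 := ENNReal.rpow_le_rpow step3 hsqs.le
    rw [rhs_unfold D lam V hs hqs, ← ENNReal.rpow_mul,
      show 1/(s*qs) * (s*qs) = 1 by field_simp, ENNReal.rpow_one] at h4
    rw [mul_comm]
    exact h4
  have step5 : ∫⁻ x in Cube n z r, w x ^ qs ≤ D ^ (s*qs) * lam ^ qs :=
    (ENNReal.mul_le_mul_iff_left (by simpa using hVt) (by simpa using hV0)).1 step4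
  -- Step 6 : take the (1/qs)-th power
  have step6 := ENNReal.rpow_le_rpow step5 (by positivity : (0:ℝ) ≤ 1/qs)
  rw [pow_unfold2 D lam hs hqs] at step6
  have hDeq : D ^ s = ENNReal.ofReal ((CR * (1 + c₄)) ^ s) := by
    rw [hD, ← ENNReal.ofReal_one, ← ENNReal.ofReal_add zero_le_one hc₄,
      ← ENNReal.ofReal_mul hCR.le, ENNReal.ofReal_rpow_of_pos (by positivity)]
  rwa [hDeq] at step6

end S9
namespace S9
open MeasureTheory

lemma lint_ofReal_rpow {n : ℕ} {ω : Rn n → ℝ} (μ : Measure (Rn n))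
    (hω : ∀ᵐ x ∂μ, 0 < ω x) (t : ℝ) :
    ∫⁻ x, ENNReal.ofReal (ω x ^ t) ∂μ = ∫⁻ x, (ENNReal.ofReal (ω x)) ^ t ∂μ := by
  apply lintegral_congr_ae
  filter_upwards [hω] with x hx
  rw [ENNReal.ofReal_rpow_of_pos hx]

lemma pm_step {n : ℕ} (z : Rn n) {r : ℝ} (hr : 0 < r) (ω : Rn n → ℝ) (hω : Measurable ω)
    {s qs q : ℝ} (hs : 0 < s) (hqs : 0 < qs) (hqsq : qs ≤ q) :
    ((volume (Cube n z r))⁻¹ * ∫⁻ x in Cube n z r, (ENNReal.ofReal (ω x)) ^ qs) ^ (1/(s*qs))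
      ≤ ((volume (Cube n z r))⁻¹ * ∫⁻ x in Cube n z r, (ENNReal.ofReal (ω x)) ^ q) ^ (1/(s*q)) := by
  rcases eq_or_lt_of_le hqsq with rfl | hlt
  · exact le_refl _
  set V : ℝ≥0∞ := volume (Cube n z r) with hV
  have hV0 : V ≠ 0 := (volume_cube_pos z hr).ne'
  have hVt : V ≠ ⊤ := (volume_cube_lt_top z r).ne
  have hq : 0 < q := hqs.trans hlt
  have hw : AEMeasurable (fun x => ENNReal.ofReal (ω x))
      (volume.restrict (Cube n z r)) :=
    (ENNReal.measurable_ofReal.comp hω).aemeasurable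
  have H := lintegral_rpow_le (volume.restrict (Cube n z r)) _ hw hqs hlt
  rw [Measure.restrict_apply_univ] at H
  have step : V⁻¹ * ∫⁻ x in Cube n z r, (ENNReal.ofReal (ω x)) ^ qs
      ≤ (V⁻¹ * ∫⁻ x in Cube n z r, (ENNReal.ofReal (ω x)) ^ q) ^ (qs/q) := by
    calc V⁻¹ * ∫⁻ x in Cube n z r, (ENNReal.ofReal (ω x)) ^ qs
        ≤ V⁻¹ * ((∫⁻ x in Cube n z r, (ENNReal.ofReal (ω x)) ^ q) ^ (qs/q) * V ^ (1 - qs/q)) :=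
          mul_le_mul_right H _
      _ = (∫⁻ x in Cube n z r, (ENNReal.ofReal (ω x)) ^ q) ^ (qs/q) * (V⁻¹ * V ^ (1 - qs/q)) := by
          ring
      _ = (∫⁻ x in Cube n z r, (ENNReal.ofReal (ω x)) ^ q) ^ (qs/q) * (V⁻¹) ^ (qs/q) := by
          congr 1
          rw [← ENNReal.rpow_neg_one V, ← ENNReal.rpow_add _ _ hV0 hVt, ← ENNReal.rpow_mul]
          congr 1
          ring
      _ = (V⁻¹ * ∫⁻ x in Cube n z r, (ENNReal.ofReal (ω x)) ^ q) ^ (qs/q) := by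
          rw [ENNReal.mul_rpow_of_nonneg _ _ (by positivity : (0:ℝ) ≤ qs/q), mul_comm]
  calc (V⁻¹ * ∫⁻ x in Cube n z r, (ENNReal.ofReal (ω x)) ^ qs) ^ (1/(s*qs))
      ≤ ((V⁻¹ * ∫⁻ x in Cube n z r, (ENNReal.ofReal (ω x)) ^ q) ^ (qs/q)) ^ (1/(s*qs)) :=
        ENNReal.rpow_le_rpow step (by positivity)
    _ = (V⁻¹ * ∫⁻ x in Cube n z r, (ENNReal.ofReal (ω x)) ^ q) ^ (1/(s*q)) := by
        rw [← ENNReal.rpow_mul]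
        congr 1
        field_simp

lemma key_large {n : ℕ} (z : Rn n) {r : ℝ} (hr1 : 1 ≤ r) (p : Rn n → ℝ)
    {s qs : ℝ} (hs : 0 < s) (hqs : 0 < qs)
    (hae : ∀ᵐ x ∂(volume.restrict (Cube n z r)), p x ≤ qs) :
    ∀ᵐ x ∂(volume.restrict (Cube n z r)),
      (volume (Cube n z r)) ^ ((p x - 1/s)/qs)
        ≤ ENNReal.ofReal 1 * (volume (Cube n z r)) ^ (1 - 1/(s*qs)) := by
  have hV1 : (1:ℝ≥0∞) ≤ volume (Cube n z r) := by
    rw [volume_cube]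
    exact one_le_pow_of_one_le' (by simpa using ENNReal.one_le_ofReal.2 hr1) n
  filter_upwards [hae] with x hx
  rw [ENNReal.ofReal_one, one_mul]
  apply ENNReal.rpow_le_rpow_of_exponent_le hV1
  rw [div_le_iff₀ hqs]
  have hs0 : s ≠ 0 := hs.ne'
  have hqs0 : qs ≠ 0 := hqs.ne'
  have e : (1 - 1/(s*qs)) * qs = qs - 1/s := by
    field_simp
  rw [e]
  linarith

lemma key_small {n : ℕ} (z : Rn n) {r : ℝ} (hr : 0 < r) (p : Rn n → ℝ)
    {s qs pm K₀ : ℝ} (hs : 0 < s) (hpm : 0 < pm) (hqpm : pm ≤ qs) (hK₀ : 0 ≤ K₀)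
    (hae : ∀ᵐ x ∂(volume.restrict (Cube n z r)), (qs - p x) * Real.log (1/r) ≤ K₀) :
    ∀ᵐ x ∂(volume.restrict (Cube n z r)),
      (volume (Cube n z r)) ^ ((p x - 1/s)/qs)
        ≤ ENNReal.ofReal (Real.exp (n * K₀ / pm)) * (volume (Cube n z r)) ^ (1 - 1/(s*qs)) := by
  have hqs : 0 < qs := hpm.trans_le hqpm
  have hV0 : (volume (Cube n z r)) ≠ 0 := (volume_cube_pos z hr).ne'
  have hVt : (volume (Cube n z r)) ≠ ⊤ := (volume_cube_lt_top z r).ne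
  filter_upwards [hae] with x hx
  have hsplit : (volume (Cube n z r)) ^ ((p x - 1/s)/qs)
      = (volume (Cube n z r)) ^ ((p x - qs)/qs) * (volume (Cube n z r)) ^ (1 - 1/(s*qs)) := by
    rw [← ENNReal.rpow_add _ _ hV0 hVt]
    congr 1
    have hs0 : s ≠ 0 := hs.ne'
    have hqs0 : qs ≠ 0 := hqs.ne'
    field_simp
    ring
  rw [hsplit]
  apply mul_le_mul_left
  have hbound : (volume (Cube n z r)) ^ ((p x - qs)/qs)
      = ENNReal.ofReal (Real.exp (Real.log r * (n * ((p x - qs)/qs)))) := by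
    rw [volume_cube, ← ENNReal.rpow_natCast, ← ENNReal.rpow_mul,
      ENNReal.ofReal_rpow_of_pos hr, Real.rpow_def_of_pos hr]
  rw [hbound]
  apply ENNReal.ofReal_le_ofReal
  apply Real.exp_le_exp.2
  have hx' : (p x - qs) * Real.log r ≤ K₀ := by
    rw [one_div, Real.log_inv] at hx
    nlinarith [hx]
  calc Real.log r * ((n : ℝ) * ((p x - qs)/qs)) = (n/qs) * ((p x - qs) * Real.log r) := by ring
    _ ≤ (n/qs) * K₀ := by
        apply mul_le_mul_of_nonneg_left hx' (by positivity)
    _ ≤ n * K₀ / pm := by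
        rw [div_mul_eq_mul_div]
        apply div_le_div_of_nonneg_left (by positivity) hpm hqpm

end S9
namespace S9
open MeasureTheory

lemma lint_div_rpow {α : Type*} [MeasurableSpace α] (μ : Measure α) (w : α → ℝ≥0∞)
    {qs K : ℝ} (hqs : 0 < qs) (hK : 0 < K)
    (hI0 : ∫⁻ y, w y ^ qs ∂μ ≠ 0) (hIt : ∫⁻ y, w y ^ qs ∂μ ≠ ⊤) :
    ∫⁻ x, (w x / (ENNReal.ofReal K * (∫⁻ y, w y ^ qs ∂μ) ^ (1/qs))) ^ qs ∂μ
      = (ENNReal.ofReal K ^ qs)⁻¹ := by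
  set I : ℝ≥0∞ := ∫⁻ y, w y ^ qs ∂μ with hI
  set lam : ℝ≥0∞ := ENNReal.ofReal K * I ^ (1/qs) with hlam
  have hK0 : ENNReal.ofReal K ≠ 0 := (ENNReal.ofReal_pos.2 hK).ne'
  have hlamq : lam ^ qs = ENNReal.ofReal K ^ qs * I := by
    rw [hlam, ENNReal.mul_rpow_of_nonneg _ _ hqs.le, ← ENNReal.rpow_mul,
      show 1/qs * qs = 1 by field_simp, ENNReal.rpow_one]
  have hlamq_ne0 : lam ^ qs ≠ 0 := by
    rw [hlamq]
    exact mul_ne_zero (by simp [ENNReal.rpow_eq_zero_iff, hK0, ENNReal.ofReal_ne_top]) hI0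
  calc ∫⁻ x, (w x / lam) ^ qs ∂μ = ∫⁻ x, w x ^ qs * (lam ^ qs)⁻¹ ∂μ := by
        apply lintegral_congr
        intro x
        rw [ENNReal.div_rpow_of_nonneg _ _ hqs.le, div_eq_mul_inv]
    _ = I * (lam ^ qs)⁻¹ := lintegral_mul_const' _ _ (by simpa using hlamq_ne0)
    _ = (ENNReal.ofReal K ^ qs)⁻¹ := by
        rw [hlamq, ENNReal.mul_inv (Or.inr hIt) (Or.inr hI0)]
        calc I * ((ENNReal.ofReal K ^ qs)⁻¹ * I⁻¹)
            = (ENNReal.ofReal K ^ qs)⁻¹ * (I * I⁻¹) := by ring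
          _ = (ENNReal.ofReal K ^ qs)⁻¹ := by rw [ENNReal.mul_inv_cancel hI0 hIt, mul_one]

lemma lint_rpow_ne_zero {n : ℕ} (z : Rn n) {r : ℝ} (hr : 0 < r) {ω : Rn n → ℝ}
    (hω : Measurable ω) (hωpos : ∀ᵐ x ∂(volume : Measure (Rn n)), 0 < ω x) (qs : ℝ) :
    ∫⁻ x in Cube n z r, (ENNReal.ofReal (ω x)) ^ qs ≠ 0 := by
  intro h
  have hmeas : Measurable fun x => (ENNReal.ofReal (ω x)) ^ qs :=
    (ENNReal.measurable_ofReal.comp hω).pow_const qs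
  have h0 := (lintegral_eq_zero_iff hmeas).1 h
  have hpos : ∀ᵐ x ∂(volume.restrict (Cube n z r)), (0:ℝ≥0∞) < (ENNReal.ofReal (ω x)) ^ qs := by
    filter_upwards [ae_restrict_of_ae hωpos] with x hx
    exact ENNReal.rpow_pos (ENNReal.ofReal_pos.2 hx) ENNReal.ofReal_ne_top
  have hfalse : ∀ᵐ _x ∂(volume.restrict (Cube n z r)), False := by
    filter_upwards [h0, hpos] with x h1 h2
    simp only [Pi.zero_apply] at h1
    rw [h1] at h2
    exact lt_irrefl _ h2
  have hne : (ae (volume.restrict (Cube n z r))).NeBot :=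
    ae_neBot.2 (by
      rw [Ne, Measure.restrict_eq_zero]
      exact (volume_cube_pos z hr).ne')
  exact hne.ne (Filter.empty_mem_iff_bot.1 hfalse)

lemma up_small {n : ℕ} (z : Rn n) {r : ℝ} (hr : 0 < r) (hr1 : r ≤ 1) (p ω : Rn n → ℝ)
    (hω : Measurable ω) {qs pm K : ℝ} (hpm : 0 < pm) (hpq : pm ≤ qs) (hK : 1 ≤ K)
    (hae : ∀ᵐ x ∂(volume.restrict (Cube n z r)), pm ≤ p x ∧ p x ≤ qs)
    (hI0 : (∫⁻ x in Cube n z r, (ENNReal.ofReal (ω x)) ^ qs) ≠ 0)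
    (hIt : (∫⁻ x in Cube n z r, (ENNReal.ofReal (ω x)) ^ qs) ≠ ⊤) :
    ∫⁻ x in Cube n z r, (ENNReal.ofReal (ω x) /
        (ENNReal.ofReal K * (∫⁻ y in Cube n z r, (ENNReal.ofReal (ω y)) ^ qs) ^ (1/qs))) ^ p x
      ≤ ENNReal.ofReal K ^ (-qs) + ENNReal.ofReal K ^ (-pm) := by
  have hqs : 0 < qs := hpm.trans_le hpq
  have hK' : (0:ℝ) < K := lt_of_lt_of_le one_pos hK
  set I : ℝ≥0∞ := ∫⁻ x in Cube n z r, (ENNReal.ofReal (ω x)) ^ qs with hI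
  set lam : ℝ≥0∞ := ENNReal.ofReal K * I ^ (1/qs) with hlam
  set t : Rn n → ℝ≥0∞ := fun x => ENNReal.ofReal (ω x) / lam with ht
  have htmeas : Measurable t := (ENNReal.measurable_ofReal.comp hω).div_const lam
  have h1 : ∫⁻ x in Cube n z r, t x ^ qs = ENNReal.ofReal K ^ (-qs) := by
    rw [ht, hlam, hI, lint_div_rpow _ _ hqs hK' hI0 hIt, ENNReal.rpow_neg]
  have h2 : ∫⁻ x in Cube n z r, t x ^ pm ≤ ENNReal.ofReal K ^ (-pm) := by
    rcases eq_or_lt_of_le hpq with rfl | hlt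
    · exact le_of_eq h1
    · have H := lintegral_rpow_le (volume.restrict (Cube n z r)) t htmeas.aemeasurable hpm hlt
      rw [Measure.restrict_apply_univ, h1] at H
      have hV1 : volume (Cube n z r) ≤ 1 := by
        rw [volume_cube]
        exact pow_le_one' (ENNReal.ofReal_le_one.2 hr1) n
      calc ∫⁻ x in Cube n z r, t x ^ pm
          ≤ (ENNReal.ofReal K ^ (-qs)) ^ (pm/qs) * volume (Cube n z r) ^ (1 - pm/qs) := H
        _ ≤ (ENNReal.ofReal K ^ (-qs)) ^ (pm/qs) * 1 := by
            exact mul_le_mul_right (ENNReal.rpow_le_one hV1 (by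
              rw [sub_nonneg, div_le_one hqs]; exact hlt.le)) _
        _ = ENNReal.ofReal K ^ (-pm) := by
            rw [mul_one, ← ENNReal.rpow_mul]
            congr 1
            field_simp
  calc ∫⁻ x in Cube n z r, t x ^ p x
      ≤ ∫⁻ x in Cube n z r, (t x ^ pm + t x ^ qs) := by
        apply lintegral_mono_ae
        filter_upwards [hae] with x hx
        exact rpow_le_add (t x) hx.1 hx.2
    _ = (∫⁻ x in Cube n z r, t x ^ pm) + ∫⁻ x in Cube n z r, t x ^ qs :=
        lintegral_add_left (htmeas.pow_const pm) _
    _ ≤ ENNReal.ofReal K ^ (-pm) + ENNReal.ofReal K ^ (-qs) := by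
        rw [h1]
        exact add_le_add_left h2 _
    _ = ENNReal.ofReal K ^ (-qs) + ENNReal.ofReal K ^ (-pm) := by ring

lemma up_large {n : ℕ} (z : Rn n) {r : ℝ} (hr1 : 1 ≤ r) (p ω : Rn n → ℝ)
    (hω : Measurable ω) {q pm N Ci K : ℝ} (hq : 0 < q) (hpm : 0 < pm) (hN : 0 ≤ N) (hK : 0 < K)
    (hd : ∀ x, (q - p x) * Real.log (Real.exp 1 + ‖x‖) ≤ Ci)
    (hae : ∀ᵐ x ∂(volume.restrict (Cube n z r)), pm ≤ p x ∧ p x ≤ q)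
    (hI0 : (∫⁻ x in Cube n z r, (ENNReal.ofReal (ω x)) ^ q) ≠ 0)
    (hIt : (∫⁻ x in Cube n z r, (ENNReal.ofReal (ω x)) ^ q) ≠ ⊤) :
    ∫⁻ x in Cube n z r, (ENNReal.ofReal (ω x) /
        (ENNReal.ofReal K * (∫⁻ y in Cube n z r, (ENNReal.ofReal (ω y)) ^ q) ^ (1/q))) ^ p x
      ≤ (∫⁻ x, ENNReal.ofReal ((Real.exp 1 + ‖x‖) ^ (-(N*pm))) ∂(volume : Measure (Rn n)))
        + ENNReal.ofReal (Real.exp (N*Ci)) * ENNReal.ofReal K ^ (-q) := by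
  set I : ℝ≥0∞ := ∫⁻ x in Cube n z r, (ENNReal.ofReal (ω x)) ^ q with hI
  set lam : ℝ≥0∞ := ENNReal.ofReal K * I ^ (1/q) with hlam
  set t : Rn n → ℝ≥0∞ := fun x => ENNReal.ofReal (ω x) / lam with ht
  have htmeas : Measurable t := (ENNReal.measurable_ofReal.comp hω).div_const lam
  have hgmeas : Measurable fun x : Rn n => ENNReal.ofReal ((Real.exp 1 + ‖x‖) ^ (-(N*pm))) :=
    (((continuous_const : Continuous fun _ : Rn n => Real.exp 1).add continuous_norm).rpow_const
      (fun x : Rn n => Or.inl (ne_of_gt (add_pos_of_pos_of_nonneg (Real.exp_pos 1) (norm_nonneg x))))).measurable.ennreal_ofReal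
  have h1 : ∫⁻ x in Cube n z r, t x ^ q = ENNReal.ofReal K ^ (-q) := by
    rw [ht, hlam, hI, lint_div_rpow _ _ hq hK hI0 hIt, ENNReal.rpow_neg]
  have hpt : ∀ᵐ x ∂(volume.restrict (Cube n z r)),
      t x ^ p x ≤ ENNReal.ofReal ((Real.exp 1 + ‖x‖) ^ (-(N*pm)))
        + t x ^ q * ENNReal.ofReal (Real.exp (N*Ci)) := by
    filter_upwards [hae] with x hx
    have h1e : (1:ℝ) ≤ Real.exp 1 := by have := Real.add_one_le_exp (1:ℝ); linarith
    have hg1 : (1:ℝ) ≤ Real.exp 1 + ‖x‖ := by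
      have := norm_nonneg x; linarith
    have hgpos : (0:ℝ) < Real.exp 1 + ‖x‖ := lt_of_lt_of_le one_pos hg1
    set G : ℝ≥0∞ := ENNReal.ofReal ((Real.exp 1 + ‖x‖) ^ (-N)) with hG
    have hG0 : G ≠ 0 := (ENNReal.ofReal_pos.2 (Real.rpow_pos_of_pos hgpos _)).ne'
    have hGt : G ≠ ⊤ := ENNReal.ofReal_ne_top
    have hG1 : G ≤ 1 := by
      rw [hG, ← ENNReal.ofReal_one]
      exact ENNReal.ofReal_le_ofReal
        (Real.rpow_le_one_of_one_le_of_nonpos hg1 (neg_nonpos.2 hN))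
    have base := rpow_split (t x) hG0 hGt (hpm.trans_le hx.1 : (0:ℝ) < p x) hx.2
    have e1 : G ^ p x ≤ ENNReal.ofReal ((Real.exp 1 + ‖x‖) ^ (-(N*pm))) := by
      calc G ^ p x ≤ G ^ pm := ENNReal.rpow_le_rpow_of_exponent_ge hG1 hx.1
        _ = ENNReal.ofReal ((Real.exp 1 + ‖x‖) ^ (-(N*pm))) := by
            rw [hG, ENNReal.ofReal_rpow_of_pos (Real.rpow_pos_of_pos hgpos _),
              ← Real.rpow_mul hgpos.le]
            congr 2
            ring
    have e2 : G ^ (p x - q) ≤ ENNReal.ofReal (Real.exp (N*Ci)) := by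
      rw [hG, ENNReal.ofReal_rpow_of_pos (Real.rpow_pos_of_pos hgpos _),
        ← Real.rpow_mul hgpos.le]
      apply ENNReal.ofReal_le_ofReal
      rw [Real.rpow_def_of_pos hgpos]
      apply Real.exp_le_exp.2
      calc Real.log (Real.exp 1 + ‖x‖) * (-N * (p x - q))
          = N * ((q - p x) * Real.log (Real.exp 1 + ‖x‖)) := by ring
        _ ≤ N * Ci := mul_le_mul_of_nonneg_left (hd x) hN
    calc t x ^ p x ≤ G ^ p x + t x ^ q * G ^ (p x - q) := base
      _ ≤ _ := add_le_add e1 (mul_le_mul_right e2 _)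
  calc ∫⁻ x in Cube n z r, t x ^ p x
      ≤ ∫⁻ x in Cube n z r, (ENNReal.ofReal ((Real.exp 1 + ‖x‖) ^ (-(N*pm)))
          + t x ^ q * ENNReal.ofReal (Real.exp (N*Ci))) := lintegral_mono_ae hpt
    _ = (∫⁻ x in Cube n z r, ENNReal.ofReal ((Real.exp 1 + ‖x‖) ^ (-(N*pm))))
          + (∫⁻ x in Cube n z r, t x ^ q) * ENNReal.ofReal (Real.exp (N*Ci)) := by
        rw [lintegral_add_left hgmeas, lintegral_mul_const' _ _ ENNReal.ofReal_ne_top]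
    _ ≤ (∫⁻ x, ENNReal.ofReal ((Real.exp 1 + ‖x‖) ^ (-(N*pm))) ∂(volume : Measure (Rn n)))
          + ENNReal.ofReal (Real.exp (N*Ci)) * ENNReal.ofReal K ^ (-q) := by
        apply add_le_add
        · exact lintegral_mono' Measure.restrict_le_self (le_refl _)
        · rw [h1, mul_comm]

lemma tail_bound (n : ℕ) {a : ℝ} (ha : 0 ≤ a) :
    ∫⁻ x : Rn n, ENNReal.ofReal ((Real.exp 1 + ‖x‖) ^ (-((n:ℝ)+1+a)))
      ≤ ENNReal.ofReal (Real.exp (-a)) *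
          ∫⁻ x : Rn n, ENNReal.ofReal ((1 + ‖x‖) ^ (-((n:ℝ)+1))) := by
  rw [← lintegral_const_mul' _ _ ENNReal.ofReal_ne_top]
  apply lintegral_mono
  intro x
  dsimp only
  have h1 : (0:ℝ) < 1 + ‖x‖ := by positivity
  have h1e : (1:ℝ) ≤ Real.exp 1 := by have := Real.add_one_le_exp (1:ℝ); linarith
  have h2 : (0:ℝ) < Real.exp 1 + ‖x‖ := by positivity
  rw [← ENNReal.ofReal_mul (Real.exp_nonneg _)]
  apply ENNReal.ofReal_le_ofReal
  have hsplit : (Real.exp 1 + ‖x‖) ^ (-((n:ℝ)+1+a))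
      = (Real.exp 1 + ‖x‖) ^ (-((n:ℝ)+1)) * (Real.exp 1 + ‖x‖) ^ (-a) := by
    rw [← Real.rpow_add h2]
    congr 1
    ring
  rw [hsplit]
  have t1 : (Real.exp 1 + ‖x‖) ^ (-((n:ℝ)+1)) ≤ (1 + ‖x‖) ^ (-((n:ℝ)+1)) :=
    Real.rpow_le_rpow_of_nonpos h1 (by linarith)
      (neg_nonpos.2 (by positivity))
  have t2 : (Real.exp 1 + ‖x‖) ^ (-a) ≤ Real.exp (-a) := by
    rw [← Real.exp_one_rpow (-a)]
    exact Real.rpow_le_rpow_of_nonpos (Real.exp_pos 1)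
      (by linarith [norm_nonneg x]) (neg_nonpos.2 ha)
  calc (Real.exp 1 + ‖x‖) ^ (-((n:ℝ)+1)) * (Real.exp 1 + ‖x‖) ^ (-a)
      ≤ (1 + ‖x‖) ^ (-((n:ℝ)+1)) * Real.exp (-a) :=
        mul_le_mul t1 t2 (Real.rpow_nonneg h2.le _) (Real.rpow_nonneg h1.le _)
    _ = Real.exp (-a) * (1 + ‖x‖) ^ (-((n:ℝ)+1)) := by ring

lemma J_lt_top (n : ℕ) :
    ∫⁻ x : Rn n, ENNReal.ofReal ((1 + ‖x‖) ^ (-((n:ℝ)+1))) < ⊤ := by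
  have h : (Module.finrank ℝ (Rn n) : ℝ) < (n:ℝ)+1 := by
    rw [Module.finrank_fin_fun]
    linarith
  exact finite_integral_one_add_norm h

end S9
namespace S9
open MeasureTheory

lemma essSup_le_real {α : Type*} [MeasurableSpace α] {μ : Measure α} (hμ : μ ≠ 0)
    {f : α → ℝ} {b c : ℝ} (hlb : ∀ᵐ x ∂μ, b ≤ f x) (hub : ∀ᵐ x ∂μ, f x ≤ c) :
    essSup f μ ≤ c := by
  haveI : (ae μ).NeBot := ae_neBot.2 hμ
  have hcob : Filter.IsCoboundedUnder (· ≤ ·) (ae μ) f :=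
    Filter.isCoboundedUnder_le_of_eventually_le _ hlb
  exact Filter.limsup_le_of_le hcob hub

end S9
open S9 in
/-- size of `‖χ_Q‖_{L^{p(·)}_ω}` when `p_∞ = p₊`, `s > 1/p₋` and
`ω^{1/s} ∈ RH_{sp₊}`. -/
theorem statement9 (n : ℕ) (hn : 0 < n) (p ω : Rn n → ℝ)
    (hp : IsExponent n p)
    (hlog : PLog n p (pPlus n p))
    (s : ℝ) (hs : 1 / pMinus n p < s)
    (hω : IsWeight n ω)
    (hRH : RH n (s * pPlus n p) (fun x => ω x ^ (1/s))) :
    ∃ c C : ℝ, 0 < c ∧ 0 < C ∧ ∀ (z : Rn n) (r : ℝ), 0 < r →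
      (1 < r →
        ENNReal.ofReal c * wInt n ω (pPlus n p) (Cube n z r) ≤
            wNorm n p ω (cubeInd n z r) ∧
          wNorm n p ω (cubeInd n z r) ≤
            ENNReal.ofReal C * wInt n ω (pPlus n p) (Cube n z r)) ∧
      (r ≤ 1 →
        ENNReal.ofReal c * wInt n ω (pPlusOn n p (Cube n z r)) (Cube n z r) ≤
            wNorm n p ω (cubeInd n z r) ∧
          wNorm n p ω (cubeInd n z r) ≤
            ENNReal.ofReal C * wInt n ω (pPlusOn n p (Cube n z r)) (Cube n z r)) := by
  classical
  obtain ⟨hpmeas, hppos, hpm_pos, hbd⟩ := hp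
  obtain ⟨⟨Cl, hCl_pos, hCl⟩, ⟨Ci, hCi_pos, hCi⟩, -, -⟩ := hlog
  obtain ⟨hωmeas, -, hωpos⟩ := hω
  obtain ⟨CR, hCR_pos, hRH'⟩ := hRH
  set q : ℝ := pPlus n p with hq_def
  set pm : ℝ := pMinus n p with hpm_def
  -- global facts
  have hvol_ne : (volume : Measure (Rn n)) ≠ 0 := by
    intro h0
    have h1 := volume_cube_pos (fun _ => (0:ℝ) : Rn n) one_pos
    rw [h0] at h1
    simp at h1
  haveI hneb : (ae (volume : Measure (Rn n))).NeBot := ae_neBot.2 hvol_ne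
  have hbelow : Filter.IsBoundedUnder (· ≥ ·) (ae (volume : Measure (Rn n))) p :=
    ⟨0, Filter.eventually_map.2 (Filter.Eventually.of_forall fun x => (hppos x).le)⟩
  have hple : ∀ᵐ x ∂(volume : Measure (Rn n)), p x ≤ q := ae_le_essSup hbd
  have hpge : ∀ᵐ x ∂(volume : Measure (Rn n)), pm ≤ p x := ae_essInf_le hbelow
  have hpm_le_q : pm ≤ q := by
    obtain ⟨x, h1, h2⟩ := (hpge.and hple).exists
    exact h1.trans h2
  have hq_pos : 0 < q := lt_of_lt_of_le hpm_pos hpm_le_q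
  have hs_pos : 0 < s := lt_trans (by positivity) hs
  have hs_inv : 1/s < pm := by
    rw [div_lt_iff₀ hs_pos, mul_comm]
    exact (div_lt_iff₀ hpm_pos).1 hs
  -- decay consequences
  have hlog_ge : ∀ x : Rn n, 1 ≤ Real.log (Real.exp 1 + ‖x‖) := by
    intro x
    rw [Real.le_log_iff_exp_le (by positivity)]
    linarith [norm_nonneg x]
  have hdecay : ∀ x : Rn n, (q - p x) * Real.log (Real.exp 1 + ‖x‖) ≤ Ci := by
    intro x
    have h1 := hCi x
    have h2 := hlog_ge x
    have h3 : q - p x ≤ Ci / Real.log (Real.exp 1 + ‖x‖) := by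
      have h4 : q - p x ≤ |p x - q| := by rw [abs_sub_comm]; exact le_abs_self _
      linarith
    calc (q - p x) * Real.log (Real.exp 1 + ‖x‖)
        ≤ (Ci / Real.log (Real.exp 1 + ‖x‖)) * Real.log (Real.exp 1 + ‖x‖) :=
          mul_le_mul_of_nonneg_right h3 (by linarith)
      _ = Ci := div_mul_cancel₀ _ (by linarith)
  have hqmp : ∀ x : Rn n, q - p x ≤ Ci := by
    intro x
    rcases le_or_gt (q - p x) 0 with h | h
    · linarith
    · have h1 := mul_le_mul_of_nonneg_left (hlog_ge x) h.le
      have h2 := hdecay x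
      nlinarith
  -- reverse Hölder in ENNReal form
  have hRHw : ∀ (z : Rn n) (r : ℝ), 0 < r →
      ((volume (Cube n z r))⁻¹ * ∫⁻ x in Cube n z r, (ENNReal.ofReal (ω x)) ^ q) ^ (1/(s*q))
        ≤ ENNReal.ofReal CR *
          ((volume (Cube n z r))⁻¹ *
            ∫⁻ x in Cube n z r, (ENNReal.ofReal (ω x)) ^ (1/s)) := by
    intro z r hr
    have h := hRH' z r hr
    simp only [] at h
    have e1 : ∫⁻ x in Cube n z r, ENNReal.ofReal ((ω x ^ (1/s)) ^ (s * q))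
        = ∫⁻ x in Cube n z r, (ENNReal.ofReal (ω x)) ^ q := by
      apply lintegral_congr_ae
      filter_upwards [ae_restrict_of_ae hωpos] with x hx
      rw [← Real.rpow_mul hx.le, show 1/s * (s*q) = q by field_simp,
        ENNReal.ofReal_rpow_of_pos hx]
    have e2 : ∫⁻ x in Cube n z r, ENNReal.ofReal (ω x ^ (1/s))
        = ∫⁻ x in Cube n z r, (ENNReal.ofReal (ω x)) ^ (1/s) :=
      lint_ofReal_rpow _ (ae_restrict_of_ae hωpos) _
    rw [e1, e2] at h
    exact h
  -- constants
  set c₄s : ℝ := Real.exp (n * (Cl + Ci) / pm) with hc4s_def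
  have hc4s_pos : 0 < c₄s := by rw [hc4s_def]; positivity
  set Ms : ℝ := (CR * (1 + c₄s)) ^ s with hMs_def
  have hMs_pos : 0 < Ms := by rw [hMs_def]; positivity
  set Ml : ℝ := (CR * (1 + 1)) ^ s with hMl_def
  have hMl_pos : 0 < Ml := by rw [hMl_def]; positivity
  set Jr : ℝ := (∫⁻ x : Rn n, ENNReal.ofReal ((1 + ‖x‖) ^ (-((n:ℝ)+1)))).toReal with hJr_def
  have hJr_nonneg : 0 ≤ Jr := ENNReal.toReal_nonneg
  set a : ℝ := max 0 (Real.log (2 * (Jr + 1))) with ha_def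
  have ha_nonneg : 0 ≤ a := le_max_left _ _
  set N : ℝ := ((n:ℝ)+1+a)/pm with hN_def
  have hN_nonneg : 0 ≤ N := by rw [hN_def]; positivity
  have hNpm : N * pm = (n:ℝ)+1+a := by
    rw [hN_def, div_mul_cancel₀ _ hpm_pos.ne']
  set Ks : ℝ := (2:ℝ) ^ (1/pm) with hKs_def
  have hKs_one : 1 ≤ Ks := by
    rw [hKs_def]
    calc (1:ℝ) = 2 ^ (0:ℝ) := (Real.rpow_zero 2).symm
      _ ≤ 2 ^ (1/pm) := Real.rpow_le_rpow_of_exponent_le one_le_two (by positivity)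
  set KL : ℝ := (2 * Real.exp (N*Ci)) ^ (1/q) with hKL_def
  have hKL_pos : 0 < KL := by rw [hKL_def]; positivity
  refine ⟨min Ms⁻¹ Ml⁻¹, max Ks KL, by positivity,
    lt_of_lt_of_le one_pos (le_trans hKs_one (le_max_left _ _)), ?_⟩
  intro z r hr
  -- per-cube setup
  have hQmeas : MeasurableSet (Cube n z r) := measurableSet_cube z r
  have hμQ_ne : (volume.restrict (Cube n z r)) ≠ 0 := by
    rw [Ne, Measure.restrict_eq_zero]
    exact (volume_cube_pos z hr).ne'
  haveI : (ae (volume.restrict (Cube n z r))).NeBot := ae_neBot.2 hμQ_ne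
  have hpgeQ : ∀ᵐ x ∂(volume.restrict (Cube n z r)), pm ≤ p x := ae_restrict_of_ae hpge
  have hpleQ : ∀ᵐ x ∂(volume.restrict (Cube n z r)), p x ≤ q := ae_restrict_of_ae hple
  have hpsQ : ∀ᵐ x ∂(volume.restrict (Cube n z r)), 1/s ≤ p x :=
    hpgeQ.mono fun x hx => le_trans hs_inv.le hx
  have hωposQ : ∀ᵐ x ∂(volume.restrict (Cube n z r)), 0 < ω x := ae_restrict_of_ae hωpos
  have hwn := wNorm_cubeInd p ω hppos z r
  constructor
  · -- large cubes
    intro hr1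
    have hr1' : 1 ≤ r := hr1.le
    have hwint : wInt n ω q (Cube n z r)
        = (∫⁻ x in Cube n z r, (ENNReal.ofReal (ω x)) ^ q) ^ (1/q) := by
      unfold wInt
      rw [lint_ofReal_rpow _ hωposQ q]
    constructor
    · -- lower bound, large cubes
      rw [hwn]
      apply le_sInf
      rintro lam ⟨hlam0, hmod⟩
      rcases eq_or_ne lam ⊤ with rfl | hlamt
      · exact le_top
      have hKEY := key_large z hr1' p hs_pos hq_pos hpleQ
      have hlow := low_core z hr p ω hs_pos hq_pos zero_le_one hCR_pos hlam0.ne' hlamt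
        hpsQ hKEY hmod (hRHw z r hr)
      rw [← hwint] at hlow
      calc ENNReal.ofReal (min Ms⁻¹ Ml⁻¹) * wInt n ω q (Cube n z r)
          ≤ ENNReal.ofReal Ml⁻¹ * wInt n ω q (Cube n z r) :=
            mul_le_mul_left (ENNReal.ofReal_le_ofReal (min_le_right _ _)) _
        _ ≤ ENNReal.ofReal Ml⁻¹ * (ENNReal.ofReal ((CR * (1+1)) ^ s) * lam) :=
            mul_le_mul_right hlow _
        _ = lam := by
            rw [← hMl_def, ← mul_assoc, ENNReal.ofReal_inv_of_pos hMl_pos,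
              ENNReal.inv_mul_cancel (ENNReal.ofReal_pos.2 hMl_pos).ne' ENNReal.ofReal_ne_top,
              one_mul]
    · -- upper bound, large cubes
      rcases eq_or_ne (∫⁻ x in Cube n z r, (ENNReal.ofReal (ω x)) ^ q) ⊤ with htop | hIt
      · rw [hwint, htop, ENNReal.top_rpow_of_pos (by positivity : (0:ℝ) < 1/q),
          ENNReal.mul_top (by
            simp only [Ne, ENNReal.ofReal_eq_zero, not_le]
            exact lt_of_lt_of_le hKL_pos (le_max_right _ _))]
        exact le_top
      have hI0 := lint_rpow_ne_zero z hr hωmeas hωpos q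
      have hup := up_large z hr1' p ω hωmeas hq_pos hpm_pos hN_nonneg hKL_pos hdecay
        (hpgeQ.and hpleQ) hI0 hIt
      have htail : (∫⁻ x, ENNReal.ofReal ((Real.exp 1 + ‖x‖) ^ (-(N*pm)))
            ∂(volume : Measure (Rn n))) ≤ ENNReal.ofReal (1/2) := by
        rw [hNpm]
        refine le_trans (tail_bound n ha_nonneg) ?_
        have hJ : (∫⁻ x : Rn n, ENNReal.ofReal ((1 + ‖x‖) ^ (-((n:ℝ)+1))))
            = ENNReal.ofReal Jr := by
          rw [hJr_def, ENNReal.ofReal_toReal (J_lt_top n).ne]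
        rw [hJ, ← ENNReal.ofReal_mul (Real.exp_nonneg _)]
        apply ENNReal.ofReal_le_ofReal
        have hexp : 2*(Jr+1) ≤ Real.exp a := by
          calc 2*(Jr+1) = Real.exp (Real.log (2*(Jr+1))) :=
              (Real.exp_log (by positivity)).symm
            _ ≤ Real.exp a := Real.exp_le_exp.2 (le_max_right _ _)
        rw [Real.exp_neg, inv_mul_le_iff₀ (Real.exp_pos a)]
        nlinarith [hexp]
      have hterm2 : ENNReal.ofReal (Real.exp (N*Ci)) * ENNReal.ofReal KL ^ (-q)
          = ENNReal.ofReal (1/2) := by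
        rw [ENNReal.ofReal_rpow_of_pos hKL_pos, ← ENNReal.ofReal_mul (Real.exp_nonneg _)]
        congr 1
        rw [hKL_def, ← Real.rpow_mul (by positivity), show 1/q * (-q) = -1 by field_simp,
          Real.rpow_neg_one]
        rw [mul_inv, ← mul_assoc, mul_comm (Real.exp (N*Ci)) (2:ℝ)⁻¹, mul_assoc,
          mul_inv_cancel₀ (Real.exp_ne_zero _), mul_one, one_div]
      have hmod1 : ∫⁻ x in Cube n z r, (ENNReal.ofReal (ω x) /
            (ENNReal.ofReal KL *
              (∫⁻ y in Cube n z r, (ENNReal.ofReal (ω y)) ^ q) ^ (1/q))) ^ p x ≤ 1 := by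
        refine le_trans hup ?_
        rw [hterm2]
        refine le_trans (add_le_add_left htail _) ?_
        rw [← ENNReal.ofReal_add (by norm_num) (by norm_num)]
        norm_num
      have hIr0 : (∫⁻ y in Cube n z r, (ENNReal.ofReal (ω y)) ^ q) ^ (1/q) ≠ 0 := by
        simp [ENNReal.rpow_eq_zero_iff, hI0, hIt]
      have hlam_pos : 0 < ENNReal.ofReal KL *
          (∫⁻ y in Cube n z r, (ENNReal.ofReal (ω y)) ^ q) ^ (1/q) :=
        ENNReal.mul_pos (ENNReal.ofReal_pos.2 hKL_pos).ne' hIr0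
      rw [hwn]
      calc sInf {lam | 0 < lam ∧
              ∫⁻ x in Cube n z r, (ENNReal.ofReal (ω x) / lam) ^ p x ≤ 1}
          ≤ ENNReal.ofReal KL *
              (∫⁻ y in Cube n z r, (ENNReal.ofReal (ω y)) ^ q) ^ (1/q) :=
            sInf_le ⟨hlam_pos, hmod1⟩
        _ = ENNReal.ofReal KL * wInt n ω q (Cube n z r) := by rw [hwint]
        _ ≤ ENNReal.ofReal (max Ks KL) * wInt n ω q (Cube n z r) :=
            mul_le_mul_left (ENNReal.ofReal_le_ofReal (le_max_right _ _)) _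
  · -- small cubes
    intro hr1
    set qQ : ℝ := pPlusOn n p (Cube n z r) with hqQ_def
    have hbdQ : Filter.IsBoundedUnder (· ≤ ·) (ae (volume.restrict (Cube n z r))) p := by
      obtain ⟨b, hb⟩ := hbd
      exact ⟨b, hb.filter_mono (Filter.map_mono (MeasureTheory.ae_mono Measure.restrict_le_self))⟩
    have hpleqQ : ∀ᵐ x ∂(volume.restrict (Cube n z r)), p x ≤ qQ := ae_le_essSup hbdQ
    have hqQ_le_q : qQ ≤ q := essSup_le_real hμQ_ne hpgeQ hpleQ
    have hpm_le_qQ : pm ≤ qQ := by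
      obtain ⟨x, h1, h2⟩ := (hpgeQ.and hpleqQ).exists
      exact h1.trans h2
    have hqQ_pos : 0 < qQ := lt_of_lt_of_le hpm_pos hpm_le_qQ
    have hKbd : ∀ᵐ x ∂(volume.restrict (Cube n z r)),
        (qQ - p x) * Real.log (1/r) ≤ Cl + Ci := by
      rcases le_or_gt r (1/2) with hr2 | hr2
      · have hlogr : 0 < Real.log (1/r) := Real.log_pos (by
          rw [lt_div_iff₀ hr]; linarith)
        filter_upwards [ae_restrict_mem hQmeas] with x hxQ
        have hess : qQ ≤ p x + Cl / Real.log (1/r) := by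
          apply essSup_le_real hμQ_ne hpgeQ
          filter_upwards [ae_restrict_mem hQmeas] with y hyQ
          have hdxy : dist y x ≤ r := dist_le_of_mem_cube hr.le hyQ hxQ
          have h12 : dist y x ≤ 1/2 := hdxy.trans hr2
          have habs := hCl y x h12
          rcases eq_or_lt_of_le (dist_nonneg : (0:ℝ) ≤ dist y x) with hd0 | hd0
          · rw [← hd0, Real.log_zero, neg_zero, _root_.div_zero] at habs
            have h2 := abs_le.1 habs
            have hpos : 0 ≤ Cl / Real.log (1/r) := by positivity
            linarith [h2.1, h2.2]
          · have hlogd : Real.log (1/r) ≤ -Real.log (dist y x) := by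
              rw [one_div, Real.log_inv, neg_le_neg_iff]
              exact Real.log_le_log hd0 hdxy
            have hb2 : Cl / (-Real.log (dist y x)) ≤ Cl / Real.log (1/r) :=
              div_le_div_of_nonneg_left hCl_pos.le hlogr hlogd
            have h2 := abs_le.1 habs
            linarith [h2.1, h2.2]
        have h3 : (qQ - p x) ≤ Cl / Real.log (1/r) := by linarith
        have h4 := mul_le_mul_of_nonneg_right h3 hlogr.le
        rw [div_mul_cancel₀ _ hlogr.ne'] at h4
        linarith
      · have hlogr_ge : 0 ≤ Real.log (1/r) := Real.log_nonneg (by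
          rw [le_div_iff₀ hr]; linarith)
        have hlogr_le : Real.log (1/r) ≤ 1 := by
          have h6 := Real.log_le_sub_one_of_pos (by positivity : (0:ℝ) < 1/r)
          have h5 : (1:ℝ)/r ≤ 2 := by rw [div_le_iff₀ hr]; linarith
          linarith
        apply Filter.Eventually.of_forall
        intro x
        have h1 : qQ - p x ≤ Ci := by
          have := hqmp x
          linarith [hqQ_le_q]
        rcases le_or_gt (qQ - p x) 0 with hneg | hposd
        · have h7 : (qQ - p x) * Real.log (1/r) ≤ 0 :=
            mul_nonpos_of_nonpos_of_nonneg hneg hlogr_ge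
          linarith
        · have h8 : (qQ - p x) * Real.log (1/r) ≤ Ci * 1 :=
            mul_le_mul h1 hlogr_le hlogr_ge hCi_pos.le
          linarith
    have hwint : wInt n ω qQ (Cube n z r)
        = (∫⁻ x in Cube n z r, (ENNReal.ofReal (ω x)) ^ qQ) ^ (1/qQ) := by
      unfold wInt
      rw [lint_ofReal_rpow _ hωposQ qQ]
    constructor
    · -- lower bound, small cubes
      rw [hwn]
      apply le_sInf
      rintro lam ⟨hlam0, hmod⟩
      rcases eq_or_ne lam ⊤ with rfl | hlamt
      · exact le_top
      have hKEY := key_small z hr p hs_pos hpm_pos hpm_le_qQ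
        (by positivity : (0:ℝ) ≤ Cl + Ci) hKbd
      have hRHQ := le_trans (pm_step z hr ω hωmeas hs_pos hqQ_pos hqQ_le_q) (hRHw z r hr)
      have hlow := low_core z hr p ω hs_pos hqQ_pos hc4s_pos.le hCR_pos hlam0.ne' hlamt
        hpsQ hKEY hmod hRHQ
      rw [← hwint] at hlow
      calc ENNReal.ofReal (min Ms⁻¹ Ml⁻¹) * wInt n ω qQ (Cube n z r)
          ≤ ENNReal.ofReal Ms⁻¹ * wInt n ω qQ (Cube n z r) :=
            mul_le_mul_left (ENNReal.ofReal_le_ofReal (min_le_left _ _)) _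
        _ ≤ ENNReal.ofReal Ms⁻¹ * (ENNReal.ofReal ((CR * (1 + c₄s)) ^ s) * lam) :=
            mul_le_mul_right hlow _
        _ = lam := by
            rw [← hMs_def, ← mul_assoc, ENNReal.ofReal_inv_of_pos hMs_pos,
              ENNReal.inv_mul_cancel (ENNReal.ofReal_pos.2 hMs_pos).ne' ENNReal.ofReal_ne_top,
              one_mul]
    · -- upper bound, small cubes
      rcases eq_or_ne (∫⁻ x in Cube n z r, (ENNReal.ofReal (ω x)) ^ qQ) ⊤ with htop | hIt
      · rw [hwint, htop, ENNReal.top_rpow_of_pos (by positivity : (0:ℝ) < 1/qQ),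
          ENNReal.mul_top (by
            simp only [Ne, ENNReal.ofReal_eq_zero, not_le]
            exact lt_of_lt_of_le (lt_of_lt_of_le one_pos hKs_one) (le_max_left _ _))]
        exact le_top
      have hI0 := lint_rpow_ne_zero z hr hωmeas hωpos qQ
      have hup := up_small z hr hr1 p ω hωmeas hpm_pos hpm_le_qQ hKs_one
        (hpgeQ.and hpleqQ) hI0 hIt
      have hKs_one' : 1 ≤ ENNReal.ofReal Ks := ENNReal.one_le_ofReal.2 hKs_one
      have hhalf : ENNReal.ofReal Ks ^ (-pm) = ENNReal.ofReal (1/2) := by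
        rw [ENNReal.ofReal_rpow_of_pos (lt_of_lt_of_le one_pos hKs_one), hKs_def,
          ← Real.rpow_mul (by norm_num : (0:ℝ) ≤ 2),
          show 1/pm * -pm = -1 by field_simp, Real.rpow_neg_one]
        norm_num
      have hmodbd : ENNReal.ofReal Ks ^ (-qQ) + ENNReal.ofReal Ks ^ (-pm) ≤ 1 := by
        calc ENNReal.ofReal Ks ^ (-qQ) + ENNReal.ofReal Ks ^ (-pm)
            ≤ ENNReal.ofReal Ks ^ (-pm) + ENNReal.ofReal Ks ^ (-pm) :=
              add_le_add_left (ENNReal.rpow_le_rpow_of_exponent_le hKs_one'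
                (by linarith)) _
          _ = 1 := by
              rw [hhalf, ← ENNReal.ofReal_add (by norm_num) (by norm_num)]
              norm_num
      have hIr0 : (∫⁻ y in Cube n z r, (ENNReal.ofReal (ω y)) ^ qQ) ^ (1/qQ) ≠ 0 := by
        simp [ENNReal.rpow_eq_zero_iff, hI0, hIt]
      have hlam_pos : 0 < ENNReal.ofReal Ks *
          (∫⁻ y in Cube n z r, (ENNReal.ofReal (ω y)) ^ qQ) ^ (1/qQ) :=
        ENNReal.mul_pos (ENNReal.ofReal_pos.2 (lt_of_lt_of_le one_pos hKs_one)).ne' hIr0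
      rw [hwn]
      calc sInf {lam | 0 < lam ∧
              ∫⁻ x in Cube n z r, (ENNReal.ofReal (ω x) / lam) ^ p x ≤ 1}
          ≤ ENNReal.ofReal Ks *
              (∫⁻ y in Cube n z r, (ENNReal.ofReal (ω y)) ^ qQ) ^ (1/qQ) :=
            sInf_le ⟨hlam_pos, le_trans hup hmodbd⟩
        _ = ENNReal.ofReal Ks * wInt n ω qQ (Cube n z r) := by rw [hwint]
        _ ≤ ENNReal.ofReal (max Ks KL) * wInt n ω qQ (Cube n z r) :=
            mul_le_mul_left (ENNReal.ofReal_le_ofReal (le_max_left _ _)) _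

end
end

section
/- Let 0 ≤ α < n, 0 < p < n/α, and 1/q = 1/p − α/n. Let γ > −n and assume either γ ≥ 0 or (−n < γ < 0 and q < n/|γ|). Then there exist constants c, C > 0 such that for every cube Q ⊂ ℝⁿ: c |Q|^{−α/n} ≤ (∫_Q |x|^{γp} dx)^{−1/p} (∫_Q |x|^{γq} dx)^{1/q} ≤ C |Q|^{−α/n}. -/
open MeasureTheory ENNReal Filter

noncomputable section

namespace S15
open Set Metric

lemma cube_eq_pi (n : ℕ) (z : Rn n) (r : ℝ) :
    Cube n z r = Set.pi Set.univ (fun i => Icc (z i - r/2) (z i + r/2)) := by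
  ext x
  simp only [Cube, Set.mem_setOf_eq, Set.mem_pi, Set.mem_univ, forall_true_left, Set.mem_Icc]
  constructor
  · intro h i; have := abs_le.mp (h i); constructor <;> linarith [this.1, this.2]
  · intro h i; rw [abs_le]; have := h i; constructor <;> linarith [this.1, this.2]

lemma cube_volume (n : ℕ) (z : Rn n) (r : ℝ) (hr : 0 ≤ r) :
    volume (Cube n z r) = ENNReal.ofReal (r ^ n) := by
  rw [cube_eq_pi, volume_pi_pi]
  simp [Real.volume_Icc, ENNReal.ofReal_pow hr]

lemma cube_eq_ball (n : ℕ) (z : Rn n) (r : ℝ) (hr : 0 ≤ r) :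
    Cube n z r = Metric.closedBall z (r/2) := by
  ext x
  rw [Metric.mem_closedBall, dist_pi_le_iff (by linarith : (0:ℝ) ≤ r/2)]
  simp [Cube, Real.dist_eq]

lemma dist_le_of_mem_cube {n : ℕ} {z : Rn n} {r : ℝ} (hr : 0 ≤ r) {x : Rn n}
    (hx : x ∈ Cube n z r) : dist x z ≤ r / 2 := by
  rw [cube_eq_ball n z r hr] at hx; exact hx

lemma norm_le_of_mem_cube {n : ℕ} {z : Rn n} {r : ℝ} (hr : 0 ≤ r) {x : Rn n}
    (hx : x ∈ Cube n z r) : ‖x‖ ≤ ‖z‖ + r := by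
  have h := dist_le_of_mem_cube hr hx
  have h2 : ‖x‖ - ‖z‖ ≤ ‖x - z‖ := norm_sub_norm_le x z
  rw [← dist_eq_norm] at h2
  linarith

lemma norm_ge_of_mem_cube {n : ℕ} {z : Rn n} {r : ℝ} (hr : 0 ≤ r) {x : Rn n}
    (hx : x ∈ Cube n z r) : ‖z‖ - r/2 ≤ ‖x‖ := by
  have h := dist_le_of_mem_cube hr hx
  have h2 : ‖z‖ - ‖x‖ ≤ ‖z - x‖ := norm_sub_norm_le z x
  rw [← dist_eq_norm, dist_comm] at h2
  linarith

lemma meas_f (n : ℕ) (s : ℝ) : Measurable (fun x : Rn n => ENNReal.ofReal (‖x‖ ^ s)) :=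
  ENNReal.measurable_ofReal.comp (measurable_norm.pow measurable_const)

lemma rpow_aux {a : ℝ} (ha : 0 ≤ a) (t : ℝ) (k : ℕ) : (a ^ k) ^ t = (a ^ t) ^ k := by
  rw [← Real.rpow_natCast a k, ← Real.rpow_natCast (a ^ t) k, ← Real.rpow_mul ha,
    ← Real.rpow_mul ha, mul_comm]

lemma ennreal_rpow_neg_le {a b : ℝ≥0∞} {t : ℝ} (ht : 0 ≤ t) (h : a ≤ b) :
    b ^ (-t) ≤ a ^ (-t) := by
  rw [ENNReal.rpow_neg, ENNReal.rpow_neg]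
  exact ENNReal.inv_le_inv.mpr (ENNReal.rpow_le_rpow h ht)

/-- Lower bound. -/
lemma lower_bound (n : ℕ) (hn : 0 < n) (s : ℝ) :
    ∃ c : ℝ, 0 < c ∧ ∀ (z : Rn n) (r : ℝ), 0 < r →
      ENNReal.ofReal (c * (r ^ n * (‖z‖ + r) ^ s)) ≤
        ∫⁻ x in Cube n z r, ENNReal.ofReal (‖x‖ ^ s) := by
  refine ⟨(1/4 : ℝ) ^ n * (16 : ℝ) ^ (-|s|), by positivity, ?_⟩
  intro z r hr
  set M : ℝ := ‖z‖ + r with hM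
  have hM0 : 0 < M := by positivity
  set i0 : Fin n := ⟨0, hn⟩
  set σ : ℝ := if 0 ≤ z i0 then 1 else -1 with hσ
  set z' : Rn n := fun i => if i = i0 then z i0 + σ * (r/4) else z i with hz'
  have hz'diff : ∀ i, |z' i - z i| ≤ r/4 := by
    intro i
    by_cases hi : i = i0
    · subst hi
      simp only [hz', if_pos rfl]
      rcases le_or_gt 0 (z i0) with h | h
      · rw [hσ, if_pos h]
        rw [show z i0 + 1 * (r/4) - z i0 = r/4 by ring, abs_of_nonneg (by linarith)]
      · rw [hσ, if_neg (not_le.mpr h)]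
        rw [show z i0 + (-1) * (r/4) - z i0 = -(r/4) by ring, abs_neg,
          abs_of_nonneg (by linarith)]
    · simp only [hz', if_neg hi]
      rw [sub_self, abs_zero]; linarith
  have hz'i0 : r/4 ≤ |z' i0| := by
    simp only [hz', if_pos rfl]
    rcases le_or_gt 0 (z i0) with h | h
    · rw [hσ, if_pos h, abs_of_nonneg (by linarith)]; linarith
    · rw [hσ, if_neg (not_le.mpr h), abs_of_nonpos (by linarith)]; linarith
  have hsub : Cube n z' (r/4) ⊆ Cube n z r := by
    intro x hx i
    have h1 : |x i - z' i| ≤ r/4/2 := hx i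
    have h2 := hz'diff i
    have h3 : x i - z i = (x i - z' i) + (z' i - z i) := by ring
    rw [h3]
    calc |(x i - z' i) + (z' i - z i)| ≤ |x i - z' i| + |z' i - z i| := abs_add_le _ _
      _ ≤ r/2 := by linarith
  have hQ'lb : ∀ x ∈ Cube n z' (r/4), M/16 ≤ ‖x‖ := by
    intro x hx
    rcases le_or_gt r ‖z‖ with hzr | hzr
    · have h1 := norm_ge_of_mem_cube hr.le (hsub hx)
      have : (0:ℝ) ≤ ‖z‖ := norm_nonneg z
      rw [hM]; linarith
    · have h1 : |x i0 - z' i0| ≤ r/4/2 := hx i0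
      have h3 : |z' i0| - |x i0| ≤ |z' i0 - x i0| := abs_sub_abs_le_abs_sub _ _
      rw [abs_sub_comm] at h3
      have h4 : |x i0| ≤ ‖x‖ := by
        have := norm_le_pi_norm x i0
        simpa [Real.norm_eq_abs] using this
      rw [hM]; linarith
  have hpt : ∀ x ∈ Cube n z' (r/4),
      ENNReal.ofReal ((16:ℝ) ^ (-|s|) * M ^ s) ≤ ENNReal.ofReal (‖x‖ ^ s) := by
    intro x hx
    apply ENNReal.ofReal_le_ofReal
    have hx16 : M/16 ≤ ‖x‖ := hQ'lb x hx
    have hx0 : 0 < ‖x‖ := lt_of_lt_of_le (by linarith) hx16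
    have hxM : ‖x‖ ≤ M := norm_le_of_mem_cube hr.le (hsub hx)
    rcases le_or_gt 0 s with hs | hs
    · have h1 : (M/16) ^ s ≤ ‖x‖ ^ s := Real.rpow_le_rpow (by positivity) hx16 hs
      have h2 : (M/16 : ℝ) ^ s = (16:ℝ) ^ (-|s|) * M ^ s := by
        rw [abs_of_nonneg hs, Real.div_rpow hM0.le (by norm_num), Real.rpow_neg (by norm_num)]
        ring
      linarith [h2 ▸ h1]
    · have h1 : M ^ s ≤ ‖x‖ ^ s := Real.rpow_le_rpow_of_nonpos hx0 hxM hs.le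
      have h2 : (16:ℝ) ^ (-|s|) ≤ 1 :=
        Real.rpow_le_one_of_one_le_of_nonpos (by norm_num) (neg_nonpos.mpr (abs_nonneg s))
      have h3 : 0 ≤ M ^ s := Real.rpow_nonneg hM0.le s
      nlinarith
  calc ENNReal.ofReal ((1/4 : ℝ) ^ n * (16 : ℝ) ^ (-|s|) * (r ^ n * M ^ s))
      = ENNReal.ofReal ((16:ℝ) ^ (-|s|) * M ^ s) * ENNReal.ofReal ((r/4) ^ n) := by
        rw [← ENNReal.ofReal_mul (by positivity)]
        congr 1
        rw [div_pow]; ring_nf; simp only [one_div, inv_pow]; ring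
    _ = ENNReal.ofReal ((16:ℝ) ^ (-|s|) * M ^ s) * volume (Cube n z' (r/4)) := by
        rw [cube_volume _ _ _ (by positivity)]
    _ = ∫⁻ _ in Cube n z' (r/4), ENNReal.ofReal ((16:ℝ) ^ (-|s|) * M ^ s) := by
        rw [setLIntegral_const]
    _ ≤ ∫⁻ x in Cube n z' (r/4), ENNReal.ofReal (‖x‖ ^ s) :=
        setLIntegral_mono (meas_f n s) hpt
    _ ≤ ∫⁻ x in Cube n z r, ENNReal.ofReal (‖x‖ ^ s) := lintegral_mono_set hsub


lemma cball_volume (n : ℕ) (ρ : ℝ) (hρ : 0 ≤ ρ) :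
    volume (Metric.closedBall (0 : Rn n) ρ) = ENNReal.ofReal ((2*ρ) ^ n) := by
  rw [← cube_volume n 0 (2*ρ) (by positivity), cube_eq_ball n 0 (2*ρ) (by positivity)]
  norm_num

lemma ball_bound (n : ℕ) (hn : 0 < n) (s : ℝ) (hns : -(n:ℝ) < s) (hs : s < 0) :
    ∃ C : ℝ, 0 < C ∧ ∀ R : ℝ, 0 < R →
      ∫⁻ x in Metric.closedBall (0 : Rn n) R, ENNReal.ofReal (‖x‖ ^ s) ≤
        ENNReal.ofReal (C * R ^ ((n:ℝ) + s)) := by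
  classical
  haveI : Nonempty (Fin n) := ⟨⟨0, hn⟩⟩
  have hns0 : (0:ℝ) < (n:ℝ) + s := by linarith
  set q : ℝ := (2:ℝ)⁻¹ ^ ((n:ℝ) + s) with hqdef
  have hq0 : 0 < q := Real.rpow_pos_of_pos (by norm_num) _
  have hq1 : q < 1 := Real.rpow_lt_one (by norm_num) (by norm_num) hns0
  set D : ℝ≥0∞ := ENNReal.ofReal ((2:ℝ) ^ ((n:ℝ) - s)) * (1 - ENNReal.ofReal q)⁻¹ with hD
  have hDtop : D ≠ ⊤ := by
    apply ENNReal.mul_ne_top ENNReal.ofReal_ne_top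
    rw [Ne, ENNReal.inv_eq_top, tsub_eq_zero_iff_le]
    intro h
    rw [ENNReal.one_le_ofReal] at h
    linarith
  refine ⟨D.toReal + 1, by positivity, ?_⟩
  intro R hR
  set A : ℕ → Set (Rn n) := fun k =>
    Metric.closedBall 0 (R * 2⁻¹ ^ k) \ Metric.closedBall 0 (R * 2⁻¹ ^ (k+1)) with hA
  have hcover : Metric.closedBall (0:Rn n) R ⊆ {0} ∪ ⋃ k, A k := by
    intro x hx
    by_cases hx0 : x = 0
    · exact Or.inl hx0
    · right
      have hxn : 0 < ‖x‖ := norm_pos_iff.mpr hx0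
      have hex : ∃ k : ℕ, R * 2⁻¹ ^ (k+1) < ‖x‖ := by
        obtain ⟨k, hk⟩ := exists_pow_lt_of_lt_one (div_pos hxn hR) (by norm_num : (2:ℝ)⁻¹ < 1)
        refine ⟨k, ?_⟩
        have h1 : (2:ℝ)⁻¹ ^ (k+1) ≤ 2⁻¹ ^ k :=
          pow_le_pow_of_le_one (by norm_num) (by norm_num) (by omega)
        have h2 : R * (2:ℝ)⁻¹ ^ k < ‖x‖ := by
          have := (mul_lt_mul_iff_right₀ hR).mpr hk
          rwa [mul_div_cancel₀ _ hR.ne'] at this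
        nlinarith
      set k0 := Nat.find hex with hk0def
      have hk0 : R * 2⁻¹ ^ (k0+1) < ‖x‖ := Nat.find_spec hex
      have hup : ‖x‖ ≤ R * 2⁻¹ ^ k0 := by
        rcases Nat.eq_zero_or_pos k0 with h | h
        · rw [h, pow_zero, mul_one]
          rwa [mem_closedBall_zero_iff] at hx
        · obtain ⟨m, hm⟩ := Nat.exists_eq_succ_of_ne_zero h.ne'
          have hmin := Nat.find_min hex (m := m) (by omega)
          push_neg at hmin
          rw [hm]
          exact hmin
      refine mem_iUnion.mpr ⟨k0, ?_, ?_⟩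
      · rwa [mem_closedBall_zero_iff]
      · rw [mem_closedBall_zero_iff]
        push_neg
        exact hk0
  have hterm : ∀ k : ℕ, (∫⁻ x in A k, ENNReal.ofReal (‖x‖ ^ s)) ≤
      ENNReal.ofReal ((2:ℝ) ^ ((n:ℝ) - s) * R ^ ((n:ℝ)+s)) * ENNReal.ofReal q ^ k := by
    intro k
    set ρ : ℝ := R * 2⁻¹ ^ k with hρ
    have hρ0 : 0 < ρ := by positivity
    have hb : ∀ x ∈ A k, ENNReal.ofReal (‖x‖ ^ s) ≤ ENNReal.ofReal ((ρ/2) ^ s) := by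
      intro x hx
      apply ENNReal.ofReal_le_ofReal
      have h1 : ρ/2 < ‖x‖ := by
        have h2 := hx.2
        rw [mem_closedBall_zero_iff] at h2
        push_neg at h2
        calc ρ/2 = R * 2⁻¹ ^ (k+1) := by rw [hρ, pow_succ]; ring
          _ < ‖x‖ := h2
      exact Real.rpow_le_rpow_of_nonpos (by positivity) h1.le hs.le
    have key : (ρ/2) ^ s * (2*ρ) ^ n = (2:ℝ) ^ ((n:ℝ) - s) * R ^ ((n:ℝ)+s) * q ^ k := by
      have e1 : ((ρ/2):ℝ) ^ s = R ^ s * ((2:ℝ)⁻¹ ^ s) ^ k / 2 ^ s := by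
        rw [hρ, Real.div_rpow (by positivity) (by norm_num),
          Real.mul_rpow hR.le (by positivity), rpow_aux (by norm_num) s k]
      have e2 : ((2*ρ):ℝ) ^ n = 2 ^ n * (R ^ n * ((2:ℝ)⁻¹ ^ n) ^ k) := by
        rw [hρ]; ring
      have e4 : (2:ℝ) ^ ((n:ℝ) - s) = 2 ^ n / 2 ^ s := by
        rw [Real.rpow_sub (by norm_num), Real.rpow_natCast]
      have e5 : R ^ ((n:ℝ) + s) = R ^ n * R ^ s := by
        rw [Real.rpow_add hR, Real.rpow_natCast]
      have e6 : q ^ k = ((2:ℝ)⁻¹ ^ n) ^ k * ((2:ℝ)⁻¹ ^ s) ^ k := by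
        rw [hqdef, ← mul_pow, ← Real.rpow_natCast (2⁻¹:ℝ) n, ← Real.rpow_add (by norm_num)]
      rw [e1, e2, e4, e5, e6]
      have hs2 : ((2:ℝ) ^ s) ≠ 0 := (Real.rpow_pos_of_pos (by norm_num) s).ne'
      field_simp
    calc (∫⁻ x in A k, ENNReal.ofReal (‖x‖ ^ s))
        ≤ ∫⁻ _ in A k, ENNReal.ofReal ((ρ/2) ^ s) := setLIntegral_mono measurable_const hb
      _ = ENNReal.ofReal ((ρ/2) ^ s) * volume (A k) := setLIntegral_const _ _
      _ ≤ ENNReal.ofReal ((ρ/2) ^ s) * volume (Metric.closedBall (0:Rn n) ρ) := by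
          exact mul_le_mul_right (measure_mono diff_subset) _
      _ = ENNReal.ofReal ((ρ/2) ^ s) * ENNReal.ofReal ((2*ρ) ^ n) := by
          rw [cball_volume n ρ hρ0.le]
      _ = ENNReal.ofReal ((ρ/2) ^ s * (2*ρ) ^ n) := by
          rw [← ENNReal.ofReal_mul (Real.rpow_nonneg (by positivity) s)]
      _ = ENNReal.ofReal ((2:ℝ) ^ ((n:ℝ) - s) * R ^ ((n:ℝ)+s)) * ENNReal.ofReal q ^ k := by
          rw [key, ← ENNReal.ofReal_pow hq0.le,
            ← ENNReal.ofReal_mul (by positivity)]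
  calc ∫⁻ x in Metric.closedBall (0:Rn n) R, ENNReal.ofReal (‖x‖ ^ s)
      ≤ ∫⁻ x in ({0} ∪ ⋃ k, A k : Set (Rn n)), ENNReal.ofReal (‖x‖ ^ s) :=
        lintegral_mono_set hcover
    _ ≤ (∫⁻ x in ({0} : Set (Rn n)), ENNReal.ofReal (‖x‖ ^ s)) +
        ∫⁻ x in (⋃ k, A k), ENNReal.ofReal (‖x‖ ^ s) := lintegral_union_le _ _ _
    _ = ∫⁻ x in (⋃ k, A k), ENNReal.ofReal (‖x‖ ^ s) := by
        rw [setLIntegral_measure_zero _ _ (measure_singleton 0), zero_add]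
    _ ≤ ∑' k, ∫⁻ x in A k, ENNReal.ofReal (‖x‖ ^ s) := lintegral_iUnion_le _ _
    _ ≤ ∑' k : ℕ, ENNReal.ofReal ((2:ℝ) ^ ((n:ℝ) - s) * R ^ ((n:ℝ)+s)) * ENNReal.ofReal q ^ k :=
        ENNReal.tsum_le_tsum hterm
    _ = ENNReal.ofReal ((2:ℝ) ^ ((n:ℝ) - s) * R ^ ((n:ℝ)+s)) * (1 - ENNReal.ofReal q)⁻¹ := by
        rw [ENNReal.tsum_mul_left, ENNReal.tsum_geometric]
    _ = ENNReal.ofReal (R ^ ((n:ℝ)+s)) * D := by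
        rw [hD, ENNReal.ofReal_mul (by positivity)]
        ring
    _ ≤ ENNReal.ofReal (R ^ ((n:ℝ)+s)) * ENNReal.ofReal (D.toReal + 1) := by
        refine mul_le_mul_right ?_ _
        conv_lhs => rw [← ENNReal.ofReal_toReal hDtop]
        exact ENNReal.ofReal_le_ofReal (by linarith)
    _ = ENNReal.ofReal ((D.toReal + 1) * R ^ ((n:ℝ)+s)) := by
        rw [← ENNReal.ofReal_mul (Real.rpow_nonneg hR.le _), mul_comm]


lemma cube_bounded_integral (n : ℕ) (s : ℝ) {z : Rn n} {r K : ℝ} (hr : 0 < r) (hK : 0 ≤ K)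
    (hpt : ∀ x ∈ Cube n z r, ‖x‖ ^ s ≤ K) :
    ∫⁻ x in Cube n z r, ENNReal.ofReal (‖x‖ ^ s) ≤ ENNReal.ofReal (K * r ^ n) := by
  calc ∫⁻ x in Cube n z r, ENNReal.ofReal (‖x‖ ^ s)
      ≤ ∫⁻ _ in Cube n z r, ENNReal.ofReal K :=
        setLIntegral_mono measurable_const (fun x hx => ENNReal.ofReal_le_ofReal (hpt x hx))
    _ = ENNReal.ofReal K * volume (Cube n z r) := setLIntegral_const _ _
    _ = ENNReal.ofReal (K * r ^ n) := by
        rw [cube_volume n z r hr.le, ← ENNReal.ofReal_mul hK]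

lemma upper_bound (n : ℕ) (hn : 0 < n) (s : ℝ) (hns : -(n:ℝ) < s) :
    ∃ C : ℝ, 0 < C ∧ ∀ (z : Rn n) (r : ℝ), 0 < r →
      (∫⁻ x in Cube n z r, ENNReal.ofReal (‖x‖ ^ s)) ≤
        ENNReal.ofReal (C * (r ^ n * (‖z‖ + r) ^ s)) := by
  rcases le_or_gt 0 s with hs | hs
  · refine ⟨1, one_pos, ?_⟩
    intro z r hr
    have hM0 : (0:ℝ) < ‖z‖ + r := by positivity
    have h := cube_bounded_integral n s hr (Real.rpow_nonneg hM0.le s)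
      (fun x hx => Real.rpow_le_rpow (norm_nonneg x) (norm_le_of_mem_cube hr.le hx) hs)
    calc (∫⁻ x in Cube n z r, ENNReal.ofReal (‖x‖ ^ s))
        ≤ ENNReal.ofReal ((‖z‖ + r) ^ s * r ^ n) := h
      _ = ENNReal.ofReal (1 * (r ^ n * (‖z‖ + r) ^ s)) := by ring_nf
  · obtain ⟨C0, hC0, hbb⟩ := ball_bound n hn s hns hs
    refine ⟨max ((4:ℝ) ^ (-s)) (C0 * 2 ^ n), lt_max_of_lt_left (Real.rpow_pos_of_pos
      (by norm_num) _), ?_⟩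
    intro z r hr
    set C : ℝ := max ((4:ℝ) ^ (-s)) (C0 * 2 ^ n) with hC
    have hM0 : (0:ℝ) < ‖z‖ + r := by positivity
    have hMs : 0 < (‖z‖ + r) ^ s := Real.rpow_pos_of_pos hM0 s
    have hrn : (0:ℝ) < r ^ n := by positivity
    rcases le_or_gt r ‖z‖ with hzr | hzr
    · -- cube away from origin
      have hpt : ∀ x ∈ Cube n z r, ‖x‖ ^ s ≤ ((‖z‖ + r)/4) ^ s := by
        intro x hx
        have h1 := norm_ge_of_mem_cube hr.le hx
        exact Real.rpow_le_rpow_of_nonpos (by linarith) (by linarith) hs.le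
      have h := cube_bounded_integral n s hr (Real.rpow_nonneg (by linarith) s) hpt
      refine h.trans (ENNReal.ofReal_le_ofReal ?_)
      have e1 : (((‖z‖ + r))/4) ^ s = ((4:ℝ) ^ (-s)) * (‖z‖ + r) ^ s := by
        rw [Real.div_rpow hM0.le (by norm_num), Real.rpow_neg (by norm_num)]
        ring
      rw [e1]
      have h4 : (4:ℝ) ^ (-s) ≤ C := le_max_left _ _
      linarith [mul_le_mul_of_nonneg_right h4 (mul_nonneg hMs.le hrn.le)]
    · -- cube near origin
      have hsub : Cube n z r ⊆ Metric.closedBall (0 : Rn n) (2*r) := by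
        intro x hx
        rw [mem_closedBall_zero_iff]
        have := norm_le_of_mem_cube hr.le hx
        linarith
      calc (∫⁻ x in Cube n z r, ENNReal.ofReal (‖x‖ ^ s))
          ≤ ∫⁻ x in Metric.closedBall (0 : Rn n) (2*r), ENNReal.ofReal (‖x‖ ^ s) :=
            lintegral_mono_set hsub
        _ ≤ ENNReal.ofReal (C0 * (2*r) ^ ((n:ℝ) + s)) := hbb (2*r) (by linarith)
        _ ≤ ENNReal.ofReal (C * (r ^ n * (‖z‖ + r) ^ s)) := by
            apply ENNReal.ofReal_le_ofReal
            have e1 : (2*r) ^ ((n:ℝ) + s) = (2*r) ^ n * (2*r) ^ s := by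
              rw [Real.rpow_add (by linarith), Real.rpow_natCast]
            have e2 : ((2*r):ℝ) ^ n = 2 ^ n * r ^ n := by rw [mul_pow]
            have h3 : ((2*r):ℝ) ^ s ≤ (‖z‖ + r) ^ s :=
              Real.rpow_le_rpow_of_nonpos hM0 (by linarith) hs.le
            have h4 : C0 * 2 ^ n ≤ C := le_max_right _ _
            have h5 : (0:ℝ) < (2*r) ^ s := Real.rpow_pos_of_pos (by linarith) s
            have h6 : (0:ℝ) < (2:ℝ) ^ n := by positivity
            calc C0 * (2*r) ^ ((n:ℝ) + s) = (C0 * 2 ^ n) * (r ^ n * (2*r) ^ s) := by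
                  rw [e1, e2]; ring
              _ ≤ C * (r ^ n * (‖z‖ + r) ^ s) := by
                  have t1 := mul_le_mul_of_nonneg_left h3 hrn.le
                  have t2 := mul_le_mul_of_nonneg_left t1 (le_of_lt (mul_pos hC0 h6))
                  have t3 := mul_le_mul_of_nonneg_right h4
                    (mul_nonneg hrn.le (Real.rpow_nonneg hM0.le s))
                  linarith


lemma real_calc {n : ℕ} {p q α γ : ℝ} (hn : (0:ℝ) < n) (hp : 0 < p) (hq : 0 < q)
    (hrel : 1/q = 1/p - α/n) {a b r M : ℝ} (ha : 0 < a) (hb : 0 < b) (hr : 0 < r)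
    (hM : 0 < M) :
    (a * (r ^ n * M ^ (γ*p))) ^ (-(1/p)) * (b * (r ^ n * M ^ (γ*q))) ^ (1/q)
      = (a ^ (-(1/p)) * b ^ (1/q)) * r ^ (-α) := by
  have e : ∀ (c u t : ℝ), 0 < c → (c * (r ^ n * M ^ u)) ^ t =
      Real.exp ((Real.log c + n * Real.log r + u * Real.log M) * t) := by
    intro c u t hc
    have h1 : (0:ℝ) < r ^ n := by positivity
    have h2 : (0:ℝ) < M ^ u := Real.rpow_pos_of_pos hM u
    rw [Real.rpow_def_of_pos (by positivity)]
    congr 1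
    rw [Real.log_mul hc.ne' (by positivity), Real.log_mul h1.ne' h2.ne',
      Real.log_pow, Real.log_rpow hM]
    ring
  rw [e _ _ _ ha, e _ _ _ hb, ← Real.exp_add, Real.rpow_def_of_pos ha,
    Real.rpow_def_of_pos hb, Real.rpow_def_of_pos hr, ← Real.exp_add, ← Real.exp_add]
  congr 1
  have h1 : p * (1/p) = 1 := mul_one_div_cancel hp.ne'
  have h2 : q * (1/q) = 1 := mul_one_div_cancel hq.ne'
  have h3 : (n:ℝ) * (1/q) - n * (1/p) = -α := by
    rw [hrel]
    field_simp
    ring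
  linear_combination Real.log r * h3 + γ * Real.log M * h2 - γ * Real.log M * h1


end S15

open S15

/-- for power weights `ω_γ(x) = |x|^γ`,
`(∫_Q |x|^{γp} dx)^{-1/p} (∫_Q |x|^{γq} dx)^{1/q} ≈ |Q|^{-α/n}`. -/
theorem statement15 (n : ℕ) (hn : 0 < n) (α p q γ : ℝ)
    (hα : 0 ≤ α) (hαn : α < n) (hp : 0 < p) (hpα : p * α < n)
    (hq : 1/q = 1/p - α/n) (hγ : -(n:ℝ) < γ)
    (hcase : 0 ≤ γ ∨ (γ < 0 ∧ q * |γ| < n)) :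
    ∃ c C : ℝ, 0 < c ∧ 0 < C ∧ ∀ (z : Rn n) (r : ℝ), 0 < r →
      ENNReal.ofReal c * (volume (Cube n z r)) ^ (-(α/n)) ≤
          (∫⁻ x in Cube n z r, ENNReal.ofReal (‖x‖ ^ (γ * p))) ^ (-(1/p)) *
            (∫⁻ x in Cube n z r, ENNReal.ofReal (‖x‖ ^ (γ * q))) ^ (1/q) ∧
        (∫⁻ x in Cube n z r, ENNReal.ofReal (‖x‖ ^ (γ * p))) ^ (-(1/p)) *
            (∫⁻ x in Cube n z r, ENNReal.ofReal (‖x‖ ^ (γ * q))) ^ (1/q) ≤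
          ENNReal.ofReal C * (volume (Cube n z r)) ^ (-(α/n)) := by
  have hn' : (0:ℝ) < n := Nat.cast_pos.mpr hn
  have hq1 : 0 < 1/q := by
    rw [hq, sub_pos, div_lt_div_iff₀ hn' hp]
    nlinarith
  have hq0 : 0 < q := by
    by_contra h
    push_neg at h
    have : 1/q ≤ 0 := by rw [one_div]; exact inv_nonpos.mpr h
    linarith
  have hpq : p ≤ q := by
    have h1 : 1/q ≤ 1/p := by
      rw [hq]
      have : 0 ≤ α/n := by positivity
      linarith
    have := (div_le_div_iff₀ hq0 hp).mp h1
    linarith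
  have hsp : -(n:ℝ) < γ * p := by
    rcases hcase with hγ0 | ⟨hγneg, hqγ⟩
    · nlinarith [mul_nonneg hγ0 hp.le]
    · rw [abs_of_neg hγneg] at hqγ
      have h1 : γ * q ≤ γ * p := mul_le_mul_of_nonpos_left hpq hγneg.le
      nlinarith
  have hsq : -(n:ℝ) < γ * q := by
    rcases hcase with hγ0 | ⟨hγneg, hqγ⟩
    · nlinarith [mul_nonneg hγ0 hq0.le]
    · rw [abs_of_neg hγneg] at hqγ
      nlinarith
  obtain ⟨c₁, hc₁, hL₁⟩ := lower_bound n hn (γ*p)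
  obtain ⟨C₁, hC₁, hU₁⟩ := upper_bound n hn (γ*p) hsp
  obtain ⟨c₂, hc₂, hL₂⟩ := lower_bound n hn (γ*q)
  obtain ⟨C₂, hC₂, hU₂⟩ := upper_bound n hn (γ*q) hsq
  refine ⟨C₁ ^ (-(1/p)) * c₂ ^ (1/q), c₁ ^ (-(1/p)) * C₂ ^ (1/q), by positivity,
    by positivity, ?_⟩
  intro z r hr
  have hM0 : (0:ℝ) < ‖z‖ + r := by positivity
  have hXp : (0:ℝ) < r ^ n * (‖z‖ + r) ^ (γ*p) := by positivity
  have hXq : (0:ℝ) < r ^ n * (‖z‖ + r) ^ (γ*q) := by positivity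
  have hvol : (volume (Cube n z r)) ^ (-(α/(n:ℝ))) = ENNReal.ofReal (r ^ (-α)) := by
    rw [cube_volume n z r hr.le, ENNReal.ofReal_rpow_of_pos (by positivity)]
    congr 1
    rw [← Real.rpow_natCast r n, ← Real.rpow_mul hr.le]
    congr 1
    field_simp
  constructor
  · -- lower bound on product
    have hA : (ENNReal.ofReal (C₁ * (r ^ n * (‖z‖ + r) ^ (γ*p)))) ^ (-(1/p)) ≤
        (∫⁻ x in Cube n z r, ENNReal.ofReal (‖x‖ ^ (γ * p))) ^ (-(1/p)) :=
      ennreal_rpow_neg_le (by positivity) (hU₁ z r hr)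
    have hB : (ENNReal.ofReal (c₂ * (r ^ n * (‖z‖ + r) ^ (γ*q)))) ^ (1/q) ≤
        (∫⁻ x in Cube n z r, ENNReal.ofReal (‖x‖ ^ (γ * q))) ^ (1/q) :=
      ENNReal.rpow_le_rpow (hL₂ z r hr) (by positivity)
    refine le_trans (le_of_eq ?_) (mul_le_mul' hA hB)
    rw [ENNReal.ofReal_rpow_of_pos (by positivity), ENNReal.ofReal_rpow_of_pos (by positivity),
      ← ENNReal.ofReal_mul (Real.rpow_nonneg (by positivity) _), hvol,
      ← ENNReal.ofReal_mul (by positivity)]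
    congr 1
    exact (real_calc hn' hp hq0 hq hC₁ hc₂ hr hM0).symm
  · have hA : (∫⁻ x in Cube n z r, ENNReal.ofReal (‖x‖ ^ (γ * p))) ^ (-(1/p)) ≤
        (ENNReal.ofReal (c₁ * (r ^ n * (‖z‖ + r) ^ (γ*p)))) ^ (-(1/p)) :=
      ennreal_rpow_neg_le (by positivity) (hL₁ z r hr)
    have hB : (∫⁻ x in Cube n z r, ENNReal.ofReal (‖x‖ ^ (γ * q))) ^ (1/q) ≤
        (ENNReal.ofReal (C₂ * (r ^ n * (‖z‖ + r) ^ (γ*q)))) ^ (1/q) :=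
      ENNReal.rpow_le_rpow (hU₂ z r hr) (by positivity)
    refine le_trans (mul_le_mul' hA hB) (le_of_eq ?_)
    rw [ENNReal.ofReal_rpow_of_pos (by positivity), ENNReal.ofReal_rpow_of_pos (by positivity),
      ← ENNReal.ofReal_mul (Real.rpow_nonneg (by positivity) _), hvol,
      ← ENNReal.ofReal_mul (by positivity)]
    congr 1
    exact real_calc hn' hp hq0 hq hc₁ hC₂ hr hM0


end
end
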